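/- arXiv:1302.6230 — 12 statements merged into one kernel-verified Lean document; each statement's English description precedes it below -/
import Mathlib

section
/- Let M be a monoid that is atomic (there is a map ν : M → ℕ with ν(α) = 0 if and only if α = 1 and ν(αβ) ≥ ν(α) + ν(β) for all α, β) and cancellative (axb = ayb implies x = y), and let A be its set of atoms (elements α ≠ 1 such that α = βγ implies β = 1 or γ = 1); assume A is finite and generates M. Then an element Δ ∈ M is a fundamental element (i.e., there is a permutation σ of A such that for every a ∈ A there exists Δ_a ∈ M with Δ = a·Δ_a = Δ_a·σ(a)) if and only if Δ is a Garside element (i.e., the set of left divisors of Δ and the set of right divisors of Δ coincide, this set is finite, and it generates M). -/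
/-- An element of a monoid is an *atom* if it is `≠ 1` and indecomposable:
`a = b * c` implies `b = 1` or `c = 1`. -/
def IsAtomElem {M : Type*} [Monoid M] (a : M) : Prop :=
  a ≠ 1 ∧ ∀ b c : M, a = b * c → b = 1 ∨ c = 1

/-- `Δ` is a *fundamental element*: there is a permutation `σ` of the set of atoms such that
for every atom `a` there is `Δₐ` with `Δ = a·Δₐ = Δₐ·σ(a)`. -/
def IsFundamental {M : Type*} [Monoid M] (Δ : M) : Prop :=
  ∃ σ : Equiv.Perm {a : M // IsAtomElem a}, ∀ a : {a : M // IsAtomElem a},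
    ∃ Δa : M, Δ = (a : M) * Δa ∧ Δ = Δa * ((σ a : {a : M // IsAtomElem a}) : M)

/-- `Δ` is a *Garside element*: the set of its left divisors coincides with the set of its
right divisors, this set is finite, and it generates the monoid. -/
def IsGarside {M : Type*} [Monoid M] (Δ : M) : Prop :=
  {u : M | ∃ w : M, Δ = u * w} = {u : M | ∃ w : M, Δ = w * u} ∧
  {u : M | ∃ w : M, Δ = u * w}.Finite ∧
  Submonoid.closure {u : M | ∃ w : M, Δ = u * w} = ⊤

/-
If `Δ = a Δₐ = Δₐ σ(a)` for every atom `a`, an induction on the number of atoms of `u` shows that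
whenever `u w` left-divides `Δ`, so does `w` (and symmetrically on the right), so left and right
divisors of `Δ` coincide; they are finite because a superadditive length bounds the number of
atoms in a divisor of `Δ` by `ν Δ`. Conversely, if the left and right divisors of `Δ` coincide
and generate `M`, then `M Δ = Δ M`, so by cancellativity `x Δ = Δ φ(x)` defines an automorphism
`φ` of `M`; it permutes the atoms, and every atom `a` divides `Δ = a Δₐ`, with `Δₐ φ(a) = Δ`.
-/

open Submonoid

section

variable {M : Type*} [Monoid M]

def leftDivisors (Δ : M) : Set M := {u | ∃ w, Δ = u * w}

def rightDivisors (Δ : M) : Set M := {u | ∃ w, Δ = w * u}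

lemma isCancelMul_of_mul_mul_cancel (h : ∀ a x y b : M, a * x * b = a * y * b → x = y) :
    IsCancelMul M where
  mul_left_cancel a x y hxy := h a x y 1 (by simpa using hxy)
  mul_right_cancel b x y hxy := h 1 x y b (by simpa using hxy)

lemma IsAtomElem.mem_of_mem_closure {S : Set M} {a : M} (ha : IsAtomElem a)
    (haS : a ∈ closure S) : a ∈ S := by
  induction haS using closure_induction with
  | mem x hx => exact hx
  | one => exact absurd rfl ha.1
  | mul x y _ _ ihx ihy =>
    rcases ha.2 x y rfl with rfl | rfl
    · rw [one_mul] at ha ⊢; exact ihy ha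
    · rw [mul_one] at ha ⊢; exact ihx ha

lemma IsAtomElem.map {N : Type*} [Monoid N] (e : M ≃* N) {a : M} (ha : IsAtomElem a) :
    IsAtomElem (e a) := by
  refine ⟨fun h => ha.1 (e.map_eq_one_iff.mp h), fun b c hbc => ?_⟩
  have : a = e.symm b * e.symm c := by rw [← map_mul, ← hbc, e.symm_apply_apply]
  simpa using ha.2 _ _ this

lemma isAtomElem_map_iff {N : Type*} [Monoid N] (e : M ≃* N) (a : M) :
    IsAtomElem (e a) ↔ IsAtomElem a :=
  ⟨fun h => by simpa using IsAtomElem.map e.symm h, IsAtomElem.map e⟩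

section Length

variable {ν : M → ℕ}

lemma length_le_apply_prod (hν : ∀ x y, ν x + ν y ≤ ν (x * y)) {l : List M}
    (hl : ∀ a ∈ l, 1 ≤ ν a) : l.length ≤ ν l.prod := by
  induction l with
  | nil => exact Nat.zero_le _
  | cons a l ih =>
    calc (a :: l).length = 1 + l.length := by rw [List.length_cons, add_comm]
      _ ≤ ν a + ν l.prod := add_le_add (hl a List.mem_cons_self)
          (ih fun b hb => hl b (List.mem_cons_of_mem a hb))
      _ ≤ ν (a :: l).prod := hν _ _

lemma finite_setOf_apply_le (hν : ∀ x y, ν x + ν y ≤ ν (x * y)) {A : Set M} (hAfin : A.Finite)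
    (hA : closure A = ⊤) (hνA : ∀ a ∈ A, 1 ≤ ν a) (n : ℕ) : {x | ν x ≤ n}.Finite := by
  have := hAfin.to_subtype
  refine ((List.finite_length_le A n).image fun l => (l.map Subtype.val).prod).subset ?_
  intro x hx
  obtain ⟨l, hlA, rfl⟩ := exists_list_of_mem_closure (hA ▸ mem_top x)
  lift l to List A using hlA
  refine ⟨l, ?_, rfl⟩
  calc l.length = (l.map Subtype.val).length := (List.length_map _).symm
    _ ≤ ν (l.map Subtype.val).prod :=
      length_le_apply_prod hν (List.forall_mem_map.mpr fun a _ => hνA a a.2)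
    _ ≤ n := hx

end Length

section Divisors

variable {Δ : M} {A : Set M}

lemma rightDivisors_subset_leftDivisors [IsLeftCancelMul M] (hA : closure A = ⊤)
    (h : ∀ a ∈ A, ∃ c, Δ = a * c ∧ c ∈ leftDivisors Δ) :
    rightDivisors Δ ⊆ leftDivisors Δ := by
  have key : ∀ u w, u * w ∈ leftDivisors Δ → w ∈ leftDivisors Δ := by
    intro u
    induction (hA ▸ mem_top u : u ∈ closure A) using closure_induction with
    | mem a ha =>
      rintro w ⟨v, hv⟩
      obtain ⟨c, hc, s, hs⟩ := h a ha
      have : c = w * v := mul_left_cancel (hc.symm.trans (by rw [hv, mul_assoc]))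
      exact ⟨v * s, by rw [hs, this, mul_assoc]⟩
    | one => simp
    | mul x y _ _ ihx ihy => exact fun w hw => ihy w (ihx (y * w) (by rwa [← mul_assoc]))
  rintro w ⟨u, hu⟩
  exact key u w ⟨1, by rw [mul_one, hu]⟩

lemma leftDivisors_subset_rightDivisors [IsRightCancelMul M] (hA : closure A = ⊤)
    (h : ∀ a ∈ A, ∃ c, Δ = c * a ∧ c ∈ rightDivisors Δ) :
    leftDivisors Δ ⊆ rightDivisors Δ := by
  have key : ∀ u w, w * u ∈ rightDivisors Δ → w ∈ rightDivisors Δ := by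
    intro u
    induction (hA ▸ mem_top u : u ∈ closure A) using closure_induction with
    | mem a ha =>
      rintro w ⟨v, hv⟩
      obtain ⟨c, hc, s, hs⟩ := h a ha
      have : c = v * w := mul_right_cancel (hc.symm.trans (by rw [hv, mul_assoc]))
      exact ⟨s * v, by rw [hs, this, mul_assoc]⟩
    | one => simp
    | mul x y _ _ ihx ihy => exact fun w hw => ihx w (ihy (w * x) (by rwa [mul_assoc]))
  rintro u ⟨w, hw⟩
  exact key w u ⟨1, by rw [one_mul, hw]⟩

end Divisors

/-- `Δ` is quasi-central: `M Δ = Δ M`. -/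
def IsQuasiCentral (Δ : M) : Prop :=
  (∀ x, ∃ y, x * Δ = Δ * y) ∧ ∀ y, ∃ x, x * Δ = Δ * y

lemma isQuasiCentral_of_closure_eq_top {Δ : M} {S : Set M} (hS : closure S = ⊤)
    (hl : ∀ s ∈ S, ∃ t, s * Δ = Δ * t) (hr : ∀ t ∈ S, ∃ s, s * Δ = Δ * t) :
    IsQuasiCentral Δ := by
  refine ⟨fun x => ?_, fun y => ?_⟩
  · induction (hS ▸ mem_top x : x ∈ closure S) using closure_induction with
    | mem s hs => exact hl s hs
    | one => exact ⟨1, by simp⟩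
    | mul x y _ _ ihx ihy =>
      obtain ⟨x', hx⟩ := ihx
      obtain ⟨y', hy⟩ := ihy
      exact ⟨x' * y', by rw [mul_assoc, hy, ← mul_assoc, hx, mul_assoc]⟩
  · induction (hS ▸ mem_top y : y ∈ closure S) using closure_induction with
    | mem t ht => exact hr t ht
    | one => exact ⟨1, by simp⟩
    | mul x y _ _ ihx ihy =>
      obtain ⟨x', hx⟩ := ihx
      obtain ⟨y', hy⟩ := ihy
      exact ⟨x' * y', by rw [mul_assoc, hy, ← mul_assoc, hx, mul_assoc]⟩

lemma isQuasiCentral_of_leftDivisors_eq {Δ : M} (hLR : leftDivisors Δ = rightDivisors Δ)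
    (hgen : closure (leftDivisors Δ) = ⊤) : IsQuasiCentral Δ := by
  refine isQuasiCentral_of_closure_eq_top hgen (fun s ⟨w, hw⟩ => ?_) (fun t ht => ?_)
  · obtain ⟨t, ht⟩ : w ∈ leftDivisors Δ := hLR ▸ ⟨s, hw⟩
    exact ⟨t, (congrArg (s * ·) ht).trans (by rw [← mul_assoc, ← hw])⟩
  · obtain ⟨w, hw⟩ : t ∈ rightDivisors Δ := hLR ▸ ht
    obtain ⟨s, hs⟩ : w ∈ rightDivisors Δ := hLR ▸ ⟨t, hw⟩
    exact ⟨s, (congrArg (s * ·) hw).trans (by rw [← mul_assoc, ← hs])⟩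

namespace IsQuasiCentral

variable [IsCancelMul M] {Δ : M} (h : IsQuasiCentral Δ)

noncomputable def mulEquiv : M ≃* M where
  toFun x := (h.1 x).choose
  invFun y := (h.2 y).choose
  left_inv x := mul_right_cancel (((h.2 _).choose_spec).trans (h.1 x).choose_spec.symm)
  right_inv y := mul_left_cancel (((h.1 _).choose_spec).symm.trans (h.2 y).choose_spec)
  map_mul' x y := by
    have hφ (z : M) : z * Δ = Δ * (h.1 z).choose := (h.1 z).choose_spec
    refine mul_left_cancel (a := Δ) ?_
    calc Δ * (h.1 (x * y)).choose = x * (y * Δ) := (hφ _).symm.trans (mul_assoc _ _ _)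
      _ = x * Δ * (h.1 y).choose := (congrArg (x * ·) (hφ y)).trans (mul_assoc _ _ _).symm
      _ = Δ * ((h.1 x).choose * (h.1 y).choose) :=
        (congrArg (· * _) (hφ x)).trans (mul_assoc _ _ _)

lemma mul_eq_mul_mulEquiv (x : M) : x * Δ = Δ * h.mulEquiv x := (h.1 x).choose_spec

end IsQuasiCentral

end

/-- In an atomic cancellative monoid whose (finite) set of atoms generates it, an element is
a fundamental element if and only if it is a Garside element. -/
theorem isFundamental_iff_isGarside {M : Type*} [Monoid M]
    (hatomic : ∃ ν : M → ℕ, (∀ α : M, ν α = 0 ↔ α = 1) ∧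
      ∀ α β : M, ν α + ν β ≤ ν (α * β))
    (hcancel : ∀ a x y b : M, a * x * b = a * y * b → x = y)
    (hfin : {a : M | IsAtomElem a}.Finite)
    (hgen : Submonoid.closure {a : M | IsAtomElem a} = ⊤)
    (Δ : M) :
    IsFundamental Δ ↔ IsGarside Δ := by
  have := isCancelMul_of_mul_mul_cancel hcancel
  constructor
  · rintro ⟨σ, hσ⟩
    have hL : ∀ a ∈ {a : M | IsAtomElem a}, ∃ c, Δ = a * c ∧ c ∈ leftDivisors Δ :=
      fun a ha => (hσ ⟨a, ha⟩).imp fun c hc => ⟨hc.1, _, hc.2⟩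
    have hR : ∀ a ∈ {a : M | IsAtomElem a}, ∃ c, Δ = c * a ∧ c ∈ rightDivisors Δ :=
      fun a ha => (hσ (σ.symm ⟨a, ha⟩)).imp fun c hc => ⟨by simpa using hc.2, _, hc.1⟩
    obtain ⟨ν, hν0, hν⟩ := hatomic
    have hνA : ∀ a ∈ {a : M | IsAtomElem a}, 1 ≤ ν a :=
      fun a ha => Nat.one_le_iff_ne_zero.mpr fun h => ha.1 ((hν0 a).mp h)
    refine ⟨(leftDivisors_subset_rightDivisors hgen hR).antisymm
      (rightDivisors_subset_leftDivisors hgen hL), ?_, ?_⟩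
    · refine (finite_setOf_apply_le hν hfin hgen hνA (ν Δ)).subset ?_
      rintro u ⟨w, rfl⟩
      exact (Nat.le_add_right _ _).trans (hν u w)
    · exact top_le_iff.mp (hgen ▸ closure_mono fun a ha => (hL a ha).imp fun c hc => hc.1)
  · rintro ⟨hLR, -, hgenL⟩
    set φ := (isQuasiCentral_of_leftDivisors_eq hLR hgenL).mulEquiv
    refine ⟨φ.toEquiv.subtypeEquiv fun a => (isAtomElem_map_iff φ a).symm, fun ⟨a, ha⟩ => ?_⟩
    obtain ⟨Δa, hΔa⟩ : a ∈ leftDivisors Δ := ha.mem_of_mem_closure (hgenL ▸ mem_top a)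
    refine ⟨Δa, hΔa, mul_left_cancel (a := a) ?_⟩
    calc a * Δ = Δ * φ a := IsQuasiCentral.mul_eq_mul_mulEquiv _ a
      _ = a * (Δa * φ a) := by rw [hΔa, mul_assoc]
end

section
/- Let M be an atomic cancellative monoid whose finite set A of atoms generates M, and let Δ ∈ M be a fundamental element, i.e., there is a permutation σ of A such that for every a ∈ A there exists Δ_a ∈ M with Δ = a·Δ_a = Δ_a·σ(a). Then for every U ∈ M there exists a positive integer ℓ such that U left-divides Δ^ℓ and U right-divides Δ^ℓ; in particular M satisfies Ore's condition (any two elements have a common right-multiple and a common left-multiple). -/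
/-!
Every atom left-divides `Δ`, and `a Δ = Δ σ(a)` for each atom `a`; since the atoms generate,
`v Δ ∈ Δ M` for every `v`, i.e. `Δ` can be pushed to the left through any word. Hence if
`x ∣ Δ^m` and `y ∣ Δ^n` then `x y ∣ x Δ^n ∣ Δ^(m+n)`, and induction on a word in the atoms
gives `U ∣ Δ^ℓ`. Right divisibility is the same argument in the opposite monoid, with `σ⁻¹`.
Two elements then both divide the product of their two powers of `Δ`.
-/

section Monoid

variable {M : Type*} [Monoid M] {S : Set M} {Δ : M}

theorem pow_rightDvd_pow (a : M) {m n : ℕ} (h : m ≤ n) : a ^ m ∣ᵣ a ^ n :=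
  ⟨a ^ (n - m), by rw [← pow_add, Nat.sub_add_cancel h]⟩

theorem exists_mul_eq_mul_of_mem_closure (hcomm : ∀ s ∈ S, ∃ t, s * Δ = Δ * t) {v : M}
    (hv : v ∈ Submonoid.closure S) : ∃ v', v * Δ = Δ * v' := by
  induction hv using Submonoid.closure_induction with
  | mem s hs => exact hcomm s hs
  | one => exact ⟨1, by simp⟩
  | mul x y _ _ hx hy =>
    obtain ⟨x', hx'⟩ := hx
    obtain ⟨y', hy'⟩ := hy
    exact ⟨x' * y', by rw [mul_assoc, hy', ← mul_assoc, hx', mul_assoc]⟩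

theorem exists_mul_pow_eq_pow_mul (hcomm : ∀ v : M, ∃ v', v * Δ = Δ * v') (n : ℕ) (v : M) :
    ∃ v', v * Δ ^ n = Δ ^ n * v' := by
  induction n generalizing v with
  | zero => exact ⟨v, by simp⟩
  | succ n ih =>
    obtain ⟨v', hv'⟩ := hcomm v
    obtain ⟨v'', hv''⟩ := ih v'
    exact ⟨v'', by rw [pow_succ', ← mul_assoc, hv', mul_assoc, hv'', ← mul_assoc]⟩

theorem exists_dvd_pow_of_closure_eq_top (hS : Submonoid.closure S = ⊤)
    (hdvd : ∀ s ∈ S, s ∣ Δ) (hcomm : ∀ s ∈ S, ∃ t, s * Δ = Δ * t) (U : M) :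
    ∃ n, U ∣ Δ ^ n := by
  have hcomm' (v : M) : ∃ v', v * Δ = Δ * v' :=
    exists_mul_eq_mul_of_mem_closure hcomm (hS ▸ Submonoid.mem_top v)
  induction (hS ▸ Submonoid.mem_top U : U ∈ Submonoid.closure S)
    using Submonoid.closure_induction with
  | mem s hs => exact ⟨1, by simpa using hdvd s hs⟩
  | one => exact ⟨0, one_dvd _⟩
  | mul x y _ _ hx hy =>
    obtain ⟨m, c, hc⟩ := hx
    obtain ⟨n, hn⟩ := hy
    obtain ⟨c', hc'⟩ := exists_mul_pow_eq_pow_mul hcomm' n c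
    refine ⟨m + n, ?_⟩
    have hpow : Δ ^ (m + n) = x * Δ ^ n * c' := by
      rw [pow_add, hc, mul_assoc, hc', mul_assoc]
    exact hpow ▸ (mul_dvd_mul_left x hn).mul_right c'

theorem exists_rightDvd_pow_of_closure_eq_top (hS : Submonoid.closure S = ⊤)
    (hdvd : ∀ s ∈ S, s ∣ᵣ Δ) (hcomm : ∀ s ∈ S, ∃ t, Δ * s = t * Δ) (U : M) :
    ∃ n, U ∣ᵣ Δ ^ n := by
  have hS' : Submonoid.closure (MulOpposite.unop ⁻¹' S) = ⊤ := by
    rw [← Submonoid.op_closure, hS, Submonoid.op_top]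
  obtain ⟨n, hn⟩ := exists_dvd_pow_of_closure_eq_top hS'
    (fun s hs => rightDvd_iff_op_dvd_op.mp (hdvd _ hs))
    (fun s hs => by
      obtain ⟨t, ht⟩ := hcomm _ hs
      exact ⟨MulOpposite.op t, congrArg MulOpposite.op ht⟩)
    (MulOpposite.op U)
  exact ⟨n, rightDvd_iff_op_dvd_op.mpr (by rwa [MulOpposite.op_pow])⟩

theorem exists_common_multiples_of_forall_dvd_pow
    (h : ∀ U : M, ∃ ℓ : ℕ, U ∣ Δ ^ ℓ ∧ U ∣ᵣ Δ ^ ℓ) (x y : M) :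
    (∃ z, x ∣ z ∧ y ∣ z) ∧ (∃ z, x ∣ᵣ z ∧ y ∣ᵣ z) := by
  obtain ⟨m, hxl, hxr⟩ := h x
  obtain ⟨n, hyl, hyr⟩ := h y
  exact ⟨⟨Δ ^ (m + n), hxl.trans (pow_dvd_pow Δ (by omega)),
      hyl.trans (pow_dvd_pow Δ (by omega))⟩,
    ⟨Δ ^ (m + n), hxr.trans (pow_rightDvd_pow Δ (by omega)),
      hyr.trans (pow_rightDvd_pow Δ (by omega))⟩⟩

end Monoid

namespace IsFundamental

variable {M : Type*} [Monoid M] {Δ a : M}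

theorem dvd_of_isAtomElem (hΔ : IsFundamental Δ) (ha : IsAtomElem a) : a ∣ Δ := by
  obtain ⟨σ, hσ⟩ := hΔ
  obtain ⟨Δa, h, -⟩ := hσ ⟨a, ha⟩
  exact ⟨Δa, h⟩

theorem exists_atom_mul_eq_mul (hΔ : IsFundamental Δ) (ha : IsAtomElem a) :
    ∃ t, a * Δ = Δ * t := by
  obtain ⟨σ, hσ⟩ := hΔ
  obtain ⟨Δa, h₁, h₂⟩ := hσ ⟨a, ha⟩
  refine ⟨σ ⟨a, ha⟩, ?_⟩
  calc a * Δ = a * Δa * σ ⟨a, ha⟩ := by rw [mul_assoc, ← h₂]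
    _ = Δ * σ ⟨a, ha⟩ := by rw [h₁]

theorem rightDvd_of_isAtomElem (hΔ : IsFundamental Δ) (ha : IsAtomElem a) : a ∣ᵣ Δ := by
  obtain ⟨σ, hσ⟩ := hΔ
  obtain ⟨Δa, -, h⟩ := hσ (σ.symm ⟨a, ha⟩)
  exact ⟨Δa, by rwa [Equiv.apply_symm_apply] at h⟩

theorem exists_mul_atom_eq_mul (hΔ : IsFundamental Δ) (ha : IsAtomElem a) :
    ∃ t, Δ * a = t * Δ := by
  obtain ⟨σ, hσ⟩ := hΔ
  obtain ⟨Δa, h₁, h₂⟩ := hσ (σ.symm ⟨a, ha⟩)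
  rw [Equiv.apply_symm_apply] at h₂
  refine ⟨σ.symm ⟨a, ha⟩, ?_⟩
  calc Δ * a = σ.symm ⟨a, ha⟩ * (Δa * a) := by rw [← mul_assoc, ← h₁]
    _ = σ.symm ⟨a, ha⟩ * Δ := by rw [h₂]

theorem exists_pos_dvd_pow_and_rightDvd_pow (hΔ : IsFundamental Δ)
    (hgen : Submonoid.closure {a : M | IsAtomElem a} = ⊤) (U : M) :
    ∃ ℓ : ℕ, 0 < ℓ ∧ U ∣ Δ ^ ℓ ∧ U ∣ᵣ Δ ^ ℓ := by
  obtain ⟨m, hm⟩ := exists_dvd_pow_of_closure_eq_top hgen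
    (fun _ => hΔ.dvd_of_isAtomElem) (fun _ => hΔ.exists_atom_mul_eq_mul) U
  obtain ⟨n, hn⟩ := exists_rightDvd_pow_of_closure_eq_top hgen
    (fun _ => hΔ.rightDvd_of_isAtomElem) (fun _ => hΔ.exists_mul_atom_eq_mul) U
  exact ⟨m + n + 1, by omega, hm.trans (pow_dvd_pow Δ (by omega)),
    hn.trans (pow_rightDvd_pow Δ (by omega))⟩

end IsFundamental

theorem dvd_pow_fundamental_and_ore_general {M : Type*} [Monoid M]
    (hgen : Submonoid.closure {a : M | IsAtomElem a} = ⊤)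
    (Δ : M) (hΔ : IsFundamental Δ) :
    (∀ U : M, ∃ ℓ : ℕ, 0 < ℓ ∧ (∃ w : M, Δ ^ ℓ = U * w) ∧ (∃ w : M, Δ ^ ℓ = w * U)) ∧
    (∀ x y : M,
      (∃ z : M, (∃ w : M, z = x * w) ∧ (∃ w : M, z = y * w)) ∧
      (∃ z : M, (∃ w : M, z = w * x) ∧ (∃ w : M, z = w * y))) := by
  have hdvd := hΔ.exists_pos_dvd_pow_and_rightDvd_pow hgen
  refine ⟨hdvd, exists_common_multiples_of_forall_dvd_pow (Δ := Δ) fun U => ?_⟩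
  obtain ⟨ℓ, -, hl, hr⟩ := hdvd U
  exact ⟨ℓ, hl, hr⟩

/-- If `Δ` is a fundamental element of an atomic cancellative monoid whose finite set of atoms
generates it, then every `U` left- and right-divides some positive power `Δ^ℓ`; in particular
the monoid satisfies Ore's condition: any two elements have a common right-multiple and a
common left-multiple. -/
theorem dvd_pow_fundamental_and_ore {M : Type*} [Monoid M]
    (hatomic : ∃ ν : M → ℕ, (∀ α : M, ν α = 0 ↔ α = 1) ∧
      ∀ α β : M, ν α + ν β ≤ ν (α * β))
    (hcancel : ∀ a x y b : M, a * x * b = a * y * b → x = y)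
    (hfin : {a : M | IsAtomElem a}.Finite)
    (hgen : Submonoid.closure {a : M | IsAtomElem a} = ⊤)
    (Δ : M) (hΔ : IsFundamental Δ) :
    (∀ U : M, ∃ ℓ : ℕ, 0 < ℓ ∧ (∃ w : M, Δ ^ ℓ = U * w) ∧ (∃ w : M, Δ ^ ℓ = w * U)) ∧
    (∀ x y : M,
      (∃ z : M, (∃ w : M, z = x * w) ∧ (∃ w : M, z = y * w)) ∧
      (∃ z : M, (∃ w : M, z = w * x) ∧ (∃ w : M, z = w * y))) :=
  dvd_pow_fundamental_and_ore_general hgen Δ hΔ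
end

section
/- Let M be an atomic cancellative monoid whose finite set A of atoms generates M, and let Δ ∈ M be a fundamental element with associated permutation σ of A (so Δ = a·Δ_a = Δ_a·σ(a) for every atom a), and let N be the order of σ in the symmetric group on A. Then Λ := Δ^N lies in the center of M, i.e., Λ·x = x·Λ for all x ∈ M. -/
section

variable {M : Type*} [Monoid M]

theorem semiconjBy_of_eq_mul_of_eq_mul {Δ a b d : M} (ha : Δ = a * d) (hb : Δ = d * b) :
    SemiconjBy Δ b a :=
  calc Δ * b = a * d * b := by rw [← ha]
    _ = a * Δ := by rw [mul_assoc, ← hb]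

theorem SemiconjBy.pow_of_perm {ι : Type*} {f : ι → M} {Δ : M} {σ : Equiv.Perm ι}
    (h : ∀ i, SemiconjBy Δ (f (σ i)) (f i)) (n : ℕ) (i : ι) :
    SemiconjBy (Δ ^ n) (f ((σ ^ n) i)) (f i) := by
  induction n generalizing i with
  | zero => simp
  | succ n ih =>
    rw [pow_succ', pow_succ, Equiv.Perm.mul_apply]
    exact (h i).mul_left (ih (σ i))

theorem Commute.pow_orderOf_of_perm {ι : Type*} {f : ι → M} {Δ : M} {σ : Equiv.Perm ι}
    (h : ∀ i, SemiconjBy Δ (f (σ i)) (f i)) (i : ι) : Commute (Δ ^ orderOf σ) (f i) := by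
  have := SemiconjBy.pow_of_perm h (orderOf σ) i
  rwa [pow_orderOf_eq_one, Equiv.Perm.one_apply] at this

theorem Submonoid.mem_center_of_closure_eq_top {s : Set M} (hs : closure s = ⊤) {z : M}
    (hz : ∀ a ∈ s, Commute z a) : z ∈ center M := by
  have hle : closure s ≤ centralizer {z} :=
    closure_le.mpr fun a ha => Set.mem_centralizer_iff.mpr fun _ hm => hm ▸ hz a ha
  rw [hs, top_le_iff, centralizer_eq_top_iff_subset, Set.singleton_subset_iff] at hle
  exact hle

end

theorem pow_orderOf_mem_center_general {M : Type*} [Monoid M]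
    (hgen : Submonoid.closure {a : M | IsAtomElem a} = ⊤)
    (Δ : M) (σ : Equiv.Perm {a : M // IsAtomElem a})
    (hfund : ∀ a : {a : M // IsAtomElem a},
      ∃ Δa : M, Δ = (a : M) * Δa ∧ Δ = Δa * ((σ a : {a : M // IsAtomElem a}) : M)) :
    ∀ x : M, Δ ^ (orderOf σ) * x = x * Δ ^ (orderOf σ) := by
  have hsemiconj : ∀ a, SemiconjBy Δ (σ a : M) a := fun a => by
    obtain ⟨Δa, ha, hσa⟩ := hfund a
    exact semiconjBy_of_eq_mul_of_eq_mul ha hσa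
  have hcentral : Δ ^ orderOf σ ∈ Submonoid.center M :=
    Submonoid.mem_center_of_closure_eq_top hgen fun a ha =>
      Commute.pow_orderOf_of_perm hsemiconj ⟨a, ha⟩
  exact fun x => (Submonoid.mem_center_iff.mp hcentral x).symm

/-- If `Δ` is a fundamental element of an atomic cancellative monoid whose finite set of atoms
generates it, with associated permutation `σ` of the atoms, and `N = ord(σ)` is the order of
`σ`, then `Λ = Δ^N` is central. -/
theorem pow_orderOf_mem_center {M : Type*} [Monoid M]
    (hatomic : ∃ ν : M → ℕ, (∀ α : M, ν α = 0 ↔ α = 1) ∧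
      ∀ α β : M, ν α + ν β ≤ ν (α * β))
    (hcancel : ∀ a x y b : M, a * x * b = a * y * b → x = y)
    (hfin : {a : M | IsAtomElem a}.Finite)
    (hgen : Submonoid.closure {a : M | IsAtomElem a} = ⊤)
    (Δ : M) (σ : Equiv.Perm {a : M // IsAtomElem a})
    (hfund : ∀ a : {a : M // IsAtomElem a},
      ∃ Δa : M, Δ = (a : M) * Δa ∧ Δ = Δa * ((σ a : {a : M // IsAtomElem a}) : M)) :
    ∀ x : M, Δ ^ (orderOf σ) * x = x * Δ ^ (orderOf σ) :=
  pow_orderOf_mem_center_general hgen Δ σ hfund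
end

section
/- Let L be a finite set and R a finite set of relations each of the form R_i = S_i with R_i, S_i nonempty positive words in L, let G = ⟨L | R⟩ be the presented group and G⁺ = ⟨L | R⟩_mo the presented monoid on the same presentation. Assume G⁺ is atomic, cancellative, and possesses a fundamental element. Then the localization homomorphism π : G⁺ → G (the canonical monoid homomorphism sending each generator of G⁺ to the corresponding generator of G) is injective. -/
/-- The canonical monoid homomorphism from the free monoid to the free group. -/
def iotaFG (α : Type*) : FreeMonoid α →* FreeGroup α := FreeMonoid.lift FreeGroup.of

/-- The group relators associated to a monoid presentation: each relation `w₁ = w₂`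
becomes the relator `(ι w₁)⁻¹ · ι w₂`, so that `G = ⟨L ∣ R⟩` is the group with the same
presentation as the monoid `G⁺ = ⟨L ∣ R⟩₊`. -/
def grels {α : Type*} (rels : FreeMonoid α → FreeMonoid α → Prop) : Set (FreeGroup α) :=
  {x | ∃ w₁ w₂, rels w₁ w₂ ∧ x = (iotaFG α w₁)⁻¹ * iotaFG α w₂}

theorem grels_hold {α : Type*} (rels : FreeMonoid α → FreeMonoid α → Prop) :
    ∀ a b : FreeMonoid α, rels a b →
      FreeMonoid.lift (PresentedGroup.of (rels := grels rels)) a =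
      FreeMonoid.lift (PresentedGroup.of (rels := grels rels)) b := by
  intro a b h
  have key : FreeMonoid.lift (PresentedGroup.of (rels := grels rels)) =
      (PresentedGroup.mk (grels rels)).comp (iotaFG α) :=
    FreeMonoid.hom_eq (fun x => rfl)
  rw [key]
  show QuotientGroup.mk (iotaFG α a) = QuotientGroup.mk (iotaFG α b)
  exact QuotientGroup.eq.mpr (Subgroup.subset_normalClosure ⟨a, b, h, rfl⟩)

/-- The localization homomorphism `π : G⁺ → G` from the presented monoid to the group with
the same presentation, sending each generator to the corresponding generator. -/
def locHom {α : Type*} (rels : FreeMonoid α → FreeMonoid α → Prop) :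
    PresentedMonoid rels →* PresentedGroup (grels rels) :=
  PresentedMonoid.lift PresentedGroup.of (grels_hold rels)

/-!
Every element is a product of atoms, and an atom `a` is a right divisor of `Δ` with
`Δ a = σ⁻¹(a) Δ`; hence `Δ` quasi-commutes with everything and some power of `Δ` is a left
multiple of any given element. So any two elements have a common left multiple, and a
cancellative monoid with this Ore condition embeds in its group of left fractions. The universal
property of `G = ⟨L ∣ R⟩` factors that embedding through `π`, so `π` is injective.
-/

namespace IsAtomElem

variable {M : Type*} [Monoid M] (ν : M → ℕ) (hν₀ : ∀ x, ν x = 0 → x = 1)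
  (hν : ∀ x y, ν x + ν y ≤ ν (x * y))
include hν₀ hν

theorem exists_list_prod_eq (x : M) : ∃ l : List M, (∀ a ∈ l, IsAtomElem a) ∧ l.prod = x := by
  induction hn : ν x using Nat.strong_induction_on generalizing x with
  | _ n ih =>
    by_cases hx₁ : x = 1
    · exact ⟨[], by simp, by simp [hx₁]⟩
    by_cases hx : IsAtomElem x
    · exact ⟨[x], by simpa using hx, by simp⟩
    obtain ⟨b, c, rfl, hb, hc⟩ : ∃ b c, x = b * c ∧ b ≠ 1 ∧ c ≠ 1 := by
      simpa [IsAtomElem, hx₁] using hx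
    have hνb := mt (hν₀ b) hb
    have hνc := mt (hν₀ c) hc
    have hνbc := hν b c
    obtain ⟨lb, hlb, rfl⟩ := ih (ν b) (by omega) b rfl
    obtain ⟨lc, hlc, rfl⟩ := ih (ν c) (by omega) c rfl
    exact ⟨lb ++ lc, fun a ha => (List.mem_append.mp ha).elim (hlb a) (hlc a), List.prod_append⟩

theorem induction_on {P : M → Prop} (one : P 1)
    (atom_mul : ∀ a x, IsAtomElem a → P x → P (a * x)) (x : M) : P x := by
  obtain ⟨l, hl, rfl⟩ := exists_list_prod_eq ν hν₀ hν x
  induction l with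
  | nil => exact one
  | cons a l ih =>
    rw [List.prod_cons]
    exact atom_mul a _ (hl a List.mem_cons_self) (ih fun b hb => hl b (List.mem_cons_of_mem a hb))

end IsAtomElem

namespace IsFundamental

variable {M : Type*} [Monoid M] {Δ : M}

theorem exists_eq_mul_of_isAtomElem (hΔ : IsFundamental Δ) {a : M} (ha : IsAtomElem a) :
    ∃ Δ', Δ = Δ' * a := by
  obtain ⟨σ, hσ⟩ := hΔ
  obtain ⟨Δ', -, h⟩ := hσ (σ.symm ⟨a, ha⟩)
  exact ⟨Δ', by simpa using h⟩

theorem exists_mul_eq_mul_of_isAtomElem (hΔ : IsFundamental Δ) {a : M} (ha : IsAtomElem a) :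
    ∃ b, Δ * a = b * Δ := by
  obtain ⟨σ, hσ⟩ := hΔ
  obtain ⟨Δ', h₁, h₂⟩ := hσ (σ.symm ⟨a, ha⟩)
  rw [Equiv.apply_symm_apply] at h₂
  refine ⟨σ.symm ⟨a, ha⟩, ?_⟩
  calc Δ * a = (σ.symm ⟨a, ha⟩ : M) * (Δ' * a) := by rw [← mul_assoc, ← h₁]
    _ = (σ.symm ⟨a, ha⟩ : M) * Δ := by rw [h₂]

variable (ν : M → ℕ) (hν₀ : ∀ x, ν x = 0 → x = 1) (hν : ∀ x y, ν x + ν y ≤ ν (x * y))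
include hν₀ hν

theorem exists_mul_eq_mul (hΔ : IsFundamental Δ) (x : M) : ∃ y, Δ * x = y * Δ := by
  induction x using IsAtomElem.induction_on ν hν₀ hν with
  | one => exact ⟨1, by simp⟩
  | atom_mul a x ha ih =>
    obtain ⟨y, hy⟩ := ih
    obtain ⟨b, hb⟩ := hΔ.exists_mul_eq_mul_of_isAtomElem ha
    exact ⟨b * y, by rw [← mul_assoc, hb, mul_assoc, hy, mul_assoc]⟩

theorem exists_pow_eq_mul (hΔ : IsFundamental Δ) (x : M) : ∃ n y, Δ ^ n = y * x := by
  induction x using IsAtomElem.induction_on ν hν₀ hν with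
  | one => exact ⟨0, 1, by simp⟩
  | atom_mul a x ha ih =>
    obtain ⟨n, y, hy⟩ := ih
    obtain ⟨y', hy'⟩ := hΔ.exists_mul_eq_mul ν hν₀ hν y
    obtain ⟨Δ', hΔ'⟩ := hΔ.exists_eq_mul_of_isAtomElem ha
    refine ⟨n + 1, y' * Δ', ?_⟩
    calc Δ ^ (n + 1) = y' * Δ * x := by rw [pow_succ', hy, ← mul_assoc, hy']
      _ = y' * Δ' * (a * x) := by rw [hΔ', mul_assoc y', mul_assoc y', mul_assoc Δ']

theorem exists_common_left_multiple (hΔ : IsFundamental Δ) (r s : M) :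
    ∃ r' s', s' * r = r' * s := by
  obtain ⟨m, r', hr⟩ := hΔ.exists_pow_eq_mul ν hν₀ hν r
  obtain ⟨n, s', hs⟩ := hΔ.exists_pow_eq_mul ν hν₀ hν s
  refine ⟨Δ ^ m * s', Δ ^ n * r', ?_⟩
  rw [mul_assoc, ← hr, mul_assoc, ← hs, ← pow_add, ← pow_add, add_comm]

end IsFundamental

section OreCondition

open OreLocalization

universe u

variable {M : Type u} [Monoid M]

noncomputable abbrev oreSetTopOfExistsCommonLeftMultiple [IsRightCancelMul M]
    (h : ∀ r s : M, ∃ r' s', s' * r = r' * s) : OreSet (⊤ : Submonoid M) where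
  ore_right_cancel r₁ r₂ s hs := ⟨1, by rw [mul_right_cancel hs]⟩
  oreNum r s := (h r s).choose
  oreDenom r s := ⟨(h r s).choose_spec.choose, trivial⟩
  ore_eq r s := (h r s).choose_spec.choose_spec

theorem numeratorHom_injective_of_top [IsLeftCancelMul M] [OreSet (⊤ : Submonoid M)] :
    Function.Injective (numeratorHom (S := (⊤ : Submonoid M))) := by
  intro x y hxy
  obtain ⟨u, v, hux, huv⟩ := oreDiv_eq_iff.mp hxy
  have hu : (u : M) = v := by simpa using huv
  rw [Submonoid.smul_def, smul_eq_mul, hu] at hux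
  exact (mul_left_cancel hux).symm

theorem exists_injective_monoidHom_to_group [IsCancelMul M]
    (h : ∀ r s : M, ∃ r' s', s' * r = r' * s) :
    ∃ (G : Type u) (_ : Group G) (f : M →* G), Function.Injective f := by
  let _ := oreSetTopOfExistsCommonLeftMultiple h
  let f := IsUnit.liftRight (numeratorHom (S := (⊤ : Submonoid M)))
    fun x => numerator_isUnit (⟨x, Submonoid.mem_top x⟩ : (⊤ : Submonoid M))
  exact ⟨_, inferInstance, f, Function.Injective.of_comp (f := Units.val)
    numeratorHom_injective_of_top⟩

end OreCondition

section Localization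

variable {α : Type*} {rels : FreeMonoid α → FreeMonoid α → Prop}

theorem exists_monoidHom_comp_locHom_eq {G : Type*} [Group G]
    (f : PresentedMonoid rels →* G) :
    ∃ g : PresentedGroup (grels rels) →* G, g.comp (locHom rels) = f := by
  let f₀ : α → G := fun x => f (PresentedMonoid.of rels x)
  have hf₀ : (FreeGroup.lift f₀).comp (iotaFG α) = f.comp (PresentedMonoid.mk rels) :=
    FreeMonoid.hom_eq fun x => by simp [iotaFG, f₀, PresentedMonoid.of]
  have hrels : ∀ r ∈ grels rels, FreeGroup.lift f₀ r = 1 := by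
    rintro _ ⟨w₁, w₂, hw, rfl⟩
    have hmk : PresentedMonoid.mk rels w₁ = PresentedMonoid.mk rels w₂ :=
      Quotient.sound (ConGen.Rel.of _ _ hw)
    rw [map_mul, map_inv, ← MonoidHom.comp_apply, ← MonoidHom.comp_apply, hf₀,
      MonoidHom.comp_apply, MonoidHom.comp_apply, hmk, inv_mul_cancel]
  exact ⟨PresentedGroup.toGroup hrels,
    PresentedMonoid.ext rels fun x => PresentedGroup.toGroup.of hrels⟩

theorem locHom_injective_of_injective {G : Type*} [Group G] {f : PresentedMonoid rels →* G}
    (hf : Function.Injective f) : Function.Injective (locHom rels) := by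
  obtain ⟨g, hg⟩ := exists_monoidHom_comp_locHom_eq f
  rw [← hg, MonoidHom.coe_comp] at hf
  exact hf.of_comp

end Localization

theorem locHom_injective_general {L : Type}
    (R : Set (FreeMonoid L × FreeMonoid L))
    (hatomic : ∃ ν : PresentedMonoid (fun u v => (u, v) ∈ R) → ℕ,
      (∀ α, ν α = 0 ↔ α = 1) ∧ ∀ α β, ν α + ν β ≤ ν (α * β))
    (hcancel : ∀ a x y b : PresentedMonoid (fun u v => (u, v) ∈ R),
      a * x * b = a * y * b → x = y)
    (hfund : ∃ Δ : PresentedMonoid (fun u v => (u, v) ∈ R), IsFundamental Δ) :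
    Function.Injective (locHom (fun u v => (u, v) ∈ R)) := by
  obtain ⟨ν, hν₀, hν⟩ := hatomic
  obtain ⟨Δ, hΔ⟩ := hfund
  have : IsCancelMul (PresentedMonoid (fun u v => (u, v) ∈ R)) :=
    { mul_left_cancel := fun a x y h => hcancel a x y 1 (by simpa using h)
      mul_right_cancel := fun b x y h => hcancel 1 x y b (by simpa using h) }
  obtain ⟨G, _, f, hf⟩ := exists_injective_monoidHom_to_group
    (hΔ.exists_common_left_multiple ν (fun x => (hν₀ x).mp) hν)
  exact locHom_injective_of_injective hf

/-- Let `L` be a finite alphabet and `R` a finite set of relations between nonempty positive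
words. If the presented monoid `G⁺ = ⟨L ∣ R⟩₊` is atomic, cancellative and has a fundamental
element, then the localization homomorphism `π : G⁺ → G = ⟨L ∣ R⟩` is injective. -/
theorem locHom_injective {L : Type} [Finite L]
    (R : Set (FreeMonoid L × FreeMonoid L)) (hRfin : R.Finite)
    (hRpos : ∀ p ∈ R, p.1 ≠ 1 ∧ p.2 ≠ 1)
    (hatomic : ∃ ν : PresentedMonoid (fun u v => (u, v) ∈ R) → ℕ,
      (∀ α, ν α = 0 ↔ α = 1) ∧ ∀ α β, ν α + ν β ≤ ν (α * β))
    (hcancel : ∀ a x y b : PresentedMonoid (fun u v => (u, v) ∈ R),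
      a * x * b = a * y * b → x = y)
    (hfund : ∃ Δ : PresentedMonoid (fun u v => (u, v) ∈ R), IsFundamental Δ) :
    Function.Injective (locHom (fun u v => (u, v) ∈ R)) :=
  locHom_injective_general R hatomic hcancel hfund
end

section
/- In the monoid M₆ presented by generators a, b, c, d, e, f and relations abf = bfa = fab, ace = cea = eac, def = efd = fde, ad = da, cd = dc, bc = cb, bd = db, be = eb, cf = fc, the equality c·d·e·aᵏ·f = c·e·aᵏ·f·d holds for every integer k ≥ 1. -/
/-- The six generators of the monoid `M₆`. -/
inductive L6 : Type
  | a | b | c | d | e | f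

open FreeMonoid

/-- The defining relations of `M₆`:
`abf = bfa = fab`, `ace = cea = eac`, `def = efd = fde`,
`ad = da`, `cd = dc`, `bc = cb`, `bd = db`, `be = eb`, `cf = fc`. -/
inductive R6 : FreeMonoid L6 → FreeMonoid L6 → Prop
  | abf₁ : R6 (of L6.a * of L6.b * of L6.f) (of L6.b * of L6.f * of L6.a)
  | abf₂ : R6 (of L6.a * of L6.b * of L6.f) (of L6.f * of L6.a * of L6.b)
  | ace₁ : R6 (of L6.a * of L6.c * of L6.e) (of L6.c * of L6.e * of L6.a)
  | ace₂ : R6 (of L6.a * of L6.c * of L6.e) (of L6.e * of L6.a * of L6.c)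
  | def₁ : R6 (of L6.d * of L6.e * of L6.f) (of L6.e * of L6.f * of L6.d)
  | def₂ : R6 (of L6.d * of L6.e * of L6.f) (of L6.f * of L6.d * of L6.e)
  | ad : R6 (of L6.a * of L6.d) (of L6.d * of L6.a)
  | cd : R6 (of L6.c * of L6.d) (of L6.d * of L6.c)
  | bc : R6 (of L6.b * of L6.c) (of L6.c * of L6.b)
  | bd : R6 (of L6.b * of L6.d) (of L6.d * of L6.b)
  | be : R6 (of L6.b * of L6.e) (of L6.e * of L6.b)
  | cf : R6 (of L6.c * of L6.f) (of L6.f * of L6.c)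

/-- The monoid `M₆` presented by the generators `a, …, f` and the relations `R6`. -/
abbrev M6 : Type := PresentedMonoid R6

/-- The image of a generator in `M₆`. -/
def g (x : L6) : M6 := PresentedMonoid.of R6 x

theorem Commute.mul_mul_mul_pow_mul_eq {M : Type*} [Monoid M] {a c d e f : M}
    (hace : Commute a (c * e)) (had : Commute a d) (hcd : Commute c d)
    (hdef : Commute d (e * f)) (k : ℕ) :
    c * d * e * a ^ k * f = c * e * a ^ k * f * d :=
  calc c * d * e * a ^ k * f
      = d * (c * e * a ^ k) * f := by rw [hcd.eq]; simp only [mul_assoc]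
    _ = a ^ k * (d * (c * e)) * f := by
        rw [← (hace.pow_left k).eq, ← mul_assoc, ← (had.pow_left k).eq]; simp only [mul_assoc]
    _ = a ^ k * (c * (d * (e * f))) := by rw [← mul_assoc d c, ← hcd.eq]; simp only [mul_assoc]
    _ = c * e * a ^ k * f * d := by
        rw [hdef.eq]; simp only [← mul_assoc]; rw [mul_assoc (a ^ k) c e, ← (hace.pow_left k).eq]

namespace M6

theorem commute_a_ce : Commute (g L6.a) (g L6.c * g L6.e) := by
  rw [Commute, SemiconjBy, ← mul_assoc]
  exact PresentedMonoid.mk_eq_mk_of_rel R6.ace₁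

theorem commute_a_d : Commute (g L6.a) (g L6.d) :=
  PresentedMonoid.mk_eq_mk_of_rel R6.ad

theorem commute_c_d : Commute (g L6.c) (g L6.d) :=
  PresentedMonoid.mk_eq_mk_of_rel R6.cd

theorem commute_d_ef : Commute (g L6.d) (g L6.e * g L6.f) := by
  rw [Commute, SemiconjBy, ← mul_assoc]
  exact PresentedMonoid.mk_eq_mk_of_rel R6.def₁

end M6

/-- In `M₆`, the equality `c·d·e·aᵏ·f = c·e·aᵏ·f·d` holds for every `k ≥ 1`. -/
theorem cdeakf_eq_ceakfd : ∀ k : ℕ, 1 ≤ k →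
    g L6.c * g L6.d * g L6.e * (g L6.a) ^ k * g L6.f =
    g L6.c * g L6.e * (g L6.a) ^ k * g L6.f * g L6.d := fun k _ =>
  Commute.mul_mul_mul_pow_mul_eq M6.commute_a_ce M6.commute_a_d M6.commute_c_d M6.commute_d_ef k
end

section
/- In the monoid M₆ presented by generators a, b, c, d, e, f and relations abf = bfa = fab, ace = cea = eac, def = efd = fde, ad = da, cd = dc, bc = cb, bd = db, be = eb, cf = fc, the inequality d·e·aᵏ·f ≠ e·aᵏ·f·d holds for every integer k ≥ 1; consequently M₆ is not cancellative. -/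
open FreeMonoid

/-!
No side of a defining relation of `M₆` occurs as a factor of a word in the regular language
`d e a⁺ f`, so every such side acts as the constant map to the sink state of the minimal automaton
of that language. Hence `M₆` acts on the states of this automaton, and the action separates
`d e aᵏ f`, which is accepted, from `e aᵏ f d`, which is not. On the other hand the relations give
`d e a f · c = e a f d · c`, so `c` cannot be cancelled on the right.
-/

/-- The automaton reads words from right to left, since the product of `Function.End` is
composition: `f, a⁺, e, d` lead from the initial state `0` through `1, 2, 3` to the accepting
state `4`, and every other move goes to the sink `5`. -/
def transition : L6 → Function.End (Fin 6)
  | .a => ![5, 2, 2, 5, 5, 5]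
  | .b => fun _ => 5
  | .c => fun _ => 5
  | .d => ![5, 5, 5, 4, 5, 5]
  | .e => ![5, 5, 3, 5, 5, 5]
  | .f => ![1, 5, 5, 5, 5, 5]

theorem transition_respects_R6 (u v : FreeMonoid L6) (h : R6 u v) :
    FreeMonoid.lift transition u = FreeMonoid.lift transition v := by
  cases h <;> funext i <;> fin_cases i <;> rfl

def M6.toEnd : M6 →* Function.End (Fin 6) :=
  PresentedMonoid.lift transition transition_respects_R6

theorem M6.toEnd_g (x : L6) : M6.toEnd (g x) = transition x := rfl

theorem isIdempotentElem_transition_a : IsIdempotentElem (transition .a) :=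
  funext fun i : Fin 6 => by fin_cases i <;> rfl

theorem deakf_ne_eakfd {k : ℕ} (hk : k ≠ 0) :
    g L6.d * g L6.e * g L6.a ^ k * g L6.f ≠ g L6.e * g L6.a ^ k * g L6.f * g L6.d := by
  intro h
  have h₀ := congrArg (fun x => M6.toEnd x 0) h
  simp only [map_mul, map_pow, M6.toEnd_g, isIdempotentElem_transition_a.pow_eq hk] at h₀
  exact absurd h₀ (by decide)

theorem g_commute {x y : L6} (h : R6 (of x * of y) (of y * of x)) : Commute (g x) (g y) :=
  PresentedMonoid.mk_eq_mk_of_rel h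

theorem deafc_eq_eafdc :
    g L6.d * g L6.e * g L6.a * g L6.f * g L6.c = g L6.e * g L6.a * g L6.f * g L6.d * g L6.c := by
  have hace : g L6.a * g L6.c * g L6.e = g L6.e * g L6.a * g L6.c :=
    PresentedMonoid.mk_eq_mk_of_rel R6.ace₂
  have hdef : g L6.d * g L6.e * g L6.f = g L6.e * g L6.f * g L6.d :=
    PresentedMonoid.mk_eq_mk_of_rel R6.def₁
  have hcf := g_commute R6.cf
  have hcd := g_commute R6.cd
  have hda := (g_commute R6.ad).symm
  calc g L6.d * g L6.e * g L6.a * g L6.f * g L6.c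
      = g L6.d * (g L6.a * g L6.c * g L6.e) * g L6.f := by
        rw [hace]; simp only [mul_assoc, hcf.eq]
    _ = g L6.a * g L6.c * (g L6.d * g L6.e * g L6.f) := by
        simp only [mul_assoc]; rw [hda.left_comm, hcd.symm.left_comm]
    _ = g L6.e * g L6.a * g L6.c * g L6.f * g L6.d := by
        rw [hdef]; simp only [← mul_assoc, hace]
    _ = g L6.e * g L6.a * g L6.f * g L6.d * g L6.c := by
        simp only [mul_assoc]; rw [hcf.left_comm, hcd.eq]

/-- In `M₆`, the inequality `d·e·aᵏ·f ≠ e·aᵏ·f·d` holds for every `k ≥ 1`; consequently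
`M₆` is not cancellative. -/
theorem deakf_ne_eakfd_and_not_cancellative :
    (∀ k : ℕ, 1 ≤ k →
      g L6.d * g L6.e * (g L6.a) ^ k * g L6.f ≠ g L6.e * (g L6.a) ^ k * g L6.f * g L6.d) ∧
    ¬ (∀ A X Y B : M6, A * X * B = A * Y * B → X = Y) := by
  refine ⟨fun k hk => deakf_ne_eakfd (Nat.one_le_iff_ne_zero.mp hk), fun hcancel => ?_⟩
  have hne := deakf_ne_eakfd (k := 1) one_ne_zero
  rw [pow_one] at hne
  exact hne (hcancel 1 _ _ (g L6.c) (by simpa only [one_mul] using deafc_eq_eafdc))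
end

section
/- For integers m, n ≥ 1, the group G_{m,n} presented by generators s, t_1, …, t_m, u_1, …, u_n subject to the cyclic relations s·t_1⋯t_m = t_j⋯t_m·s·t_1⋯t_{j−1} for all 1 ≤ j ≤ m+1 (all cyclic rotations of s·t_1⋯t_m are equal), the cyclic relations s·u_1⋯u_n = u_j⋯u_n·s·u_1⋯u_{j−1} for all 1 ≤ j ≤ n+1 (all cyclic rotations of s·u_1⋯u_n are equal), and t_i·u_j = u_j·t_i for all 1 ≤ i ≤ m, 1 ≤ j ≤ n, is isomorphic to ℤ × F_m × F_n, where F_m and F_n are free groups of ranks m and n. -/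
/-!
Write `T = t_1⋯t_m`, `U = u_1⋯u_n` and `Δ = s T U`. A list has all its cyclic rotations with
the same product iff each of its letters commutes with that product, so the relations of
`G_{m,n}` say that the letters of `sT` commute with `sT`, those of `sU` with `sU`, and the
`t_i` with the `u_j`. Hence `Δ = (sT) s⁻¹ (sU)` is central and `(k, a, b) ↦ Δ^k a(t) b(u)` is a
homomorphism `ℤ × F_m × F_n → G_{m,n}`. Its inverse sends `t_i ↦ x_i`, `u_j ↦ y_j` and, writing
the `ℤ`-coordinate additively, `s ↦ (1, X⁻¹, Y⁻¹)`, where `X`, `Y` are the products of the free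
generators: then `sT ↦ (1, e, Y⁻¹)` and `sU ↦ (1, X⁻¹, e)` commute with the images of their
letters, and `Δ ↦ (1, e, e)`.
-/

namespace Gmn
/-- Generators of `G_{m,n}`: `s`, `t 1, …, t m`, `u 1, …, u n`. -/
inductive Gen (m n : ℕ) : Type
  | s : Gen m n
  | t : Fin m → Gen m n
  | u : Fin n → Gen m n

/-- The word `s · t 1 ⋯ t m`. -/
def wordT (m n : ℕ) : List (Gen m n) := Gen.s :: List.ofFn (fun i => Gen.t i)

/-- The word `s · u 1 ⋯ u n`. -/
def wordU (m n : ℕ) : List (Gen m n) := Gen.s :: List.ofFn (fun j => Gen.u j)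

/-- The word `s · t 1 ⋯ t m · u 1 ⋯ u n`. -/
def wordFull (m n : ℕ) : List (Gen m n) :=
  Gen.s :: (List.ofFn (fun i => Gen.t i) ++ List.ofFn (fun j => Gen.u j))

/-- The defining relations of `G_{m,n}`: all cyclic rotations of `s·t_1⋯t_m` are equal,
all cyclic rotations of `s·u_1⋯u_n` are equal, and `t_i · u_j = u_j · t_i` for all `i, j`. -/
inductive Rel (m n : ℕ) : FreeMonoid (Gen m n) → FreeMonoid (Gen m n) → Prop
  | rotT (j : ℕ) :
      Rel m n (FreeMonoid.ofList (wordT m n)) (FreeMonoid.ofList ((wordT m n).rotate j))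
  | rotU (j : ℕ) :
      Rel m n (FreeMonoid.ofList (wordU m n)) (FreeMonoid.ofList ((wordU m n).rotate j))
  | comm (i : Fin m) (j : Fin n) :
      Rel m n (FreeMonoid.of (Gen.t i) * FreeMonoid.of (Gen.u j))
        (FreeMonoid.of (Gen.u j) * FreeMonoid.of (Gen.t i))

/-- The presented monoid `G⁺_{m,n}`. -/
abbrev GP (m n : ℕ) := PresentedMonoid (Rel m n)

/-- The image of a generator in `G⁺_{m,n}`. -/
abbrev gen {m n : ℕ} (g : Gen m n) : GP m n := PresentedMonoid.of (Rel m n) g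

/-- The element `Δ = s · t_1 ⋯ t_m · u_1 ⋯ u_n` of `G⁺_{m,n}`. -/
def Delta (m n : ℕ) : GP m n :=
  PresentedMonoid.mk (Rel m n) (FreeMonoid.ofList (wordFull m n))

/-- The canonical monoid homomorphism from the free monoid to the free group. -/
def iotaFG (α : Type*) : FreeMonoid α →* FreeGroup α := FreeMonoid.lift FreeGroup.of

/-- The group relators associated to a monoid presentation: each relation `w₁ = w₂`
becomes the relator `(ι w₁)⁻¹ · ι w₂`, so that the presented group has the same
presentation as the presented monoid. -/
def grels {α : Type*} (rels : FreeMonoid α → FreeMonoid α → Prop) : Set (FreeGroup α) :=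
  {x | ∃ w₁ w₂, rels w₁ w₂ ∧ x = (iotaFG α w₁)⁻¹ * iotaFG α w₂}

/-- The group `G_{m,n}`, presented by the same generators and relations as `G⁺_{m,n}`. -/
abbrev G (m n : ℕ) := PresentedGroup (grels (Rel m n))

end Gmn

theorem List.prod_rotate_eq_prod_iff {M : Type*} [LeftCancelMonoid M] {l : List M} :
    (∀ j, (l.rotate j).prod = l.prod) ↔ ∀ x ∈ l, Commute x l.prod := by
  constructor
  · intro h x hx
    obtain ⟨s, t, rfl⟩ := List.append_of_mem hx
    have hrot : (s ++ x :: t).rotate s.length = x :: (t ++ s) := by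
      rw [List.rotate_eq_drop_append_take (by simp), List.drop_left, List.take_left,
        List.cons_append]
    have hx_mul := h s.length
    have hmul_x := h (s.length + 1)
    rw [hrot] at hx_mul
    rw [← List.rotate_rotate, hrot, List.rotate_cons_succ, List.rotate_zero] at hmul_x
    simp only [List.prod_cons, List.prod_append, List.prod_nil, mul_one] at hx_mul hmul_x ⊢
    rw [← hx_mul]
    exact (Commute.refl x).mul_right (hx_mul.trans hmul_x.symm)
  · intro h j
    rw [List.rotate_eq_drop_append_take_mod, List.prod_append]
    have hc : Commute (l.take (j % l.length)).prod l.prod :=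
      Commute.list_prod_left _ _ fun x hx => h x (List.mem_of_mem_take hx)
    rw [← List.prod_take_mul_prod_drop l (j % l.length)] at hc ⊢
    exact (mul_left_cancel (hc.eq.trans (mul_assoc _ _ _))).symm

theorem FreeGroup.commute_lift_lift {α β H : Type*} [Group H] {f : α → H} {g : β → H}
    (h : ∀ a b, Commute (f a) (g b)) (x : FreeGroup α) (y : FreeGroup β) :
    Commute (lift f x) (lift g y) := by
  have hle : (lift f).range ≤ Subgroup.centralizer (lift g).range := by
    rw [range_lift_eq_closure (f := g), Subgroup.centralizer_closure]
    refine range_lift_le ?_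
    rintro _ ⟨a, rfl⟩ _ ⟨b, rfl⟩
    exact (h a b).eq.symm
  exact (Subgroup.mem_centralizer_iff.mp (hle ⟨x, rfl⟩) _ ⟨y, rfl⟩).symm

theorem PresentedGroup.mem_center_of_forall_commute_of {α : Type*} {rels : Set (FreeGroup α)}
    {z : PresentedGroup rels} (h : ∀ a, Commute (of a) z) : z ∈ Subgroup.center _ := by
  rw [← Subgroup.centralizer_univ, ← Subgroup.coe_top, ← closure_range_of rels,
    Subgroup.centralizer_closure]
  rintro _ ⟨a, rfl⟩
  exact (h a).eq

namespace Gmn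

section Presentation

variable {α H : Type*}

def RespectsRels [Monoid H] (rels : FreeMonoid α → FreeMonoid α → Prop) (f : α → H) : Prop :=
  ∀ w₁ w₂, rels w₁ w₂ → FreeMonoid.lift f w₁ = FreeMonoid.lift f w₂

variable [Group H]

theorem lift_iotaFG (f : α → H) (w : FreeMonoid α) :
    FreeGroup.lift f (iotaFG α w) = FreeMonoid.lift f w := by
  rw [iotaFG, ← MonoidHom.comp_apply, FreeMonoid.comp_lift]
  congr 2
  funext a
  exact FreeGroup.lift_apply_of

theorem lift_eq_one_of_mem_grels {rels : FreeMonoid α → FreeMonoid α → Prop} {f : α → H}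
    (hf : RespectsRels rels f) : ∀ r ∈ grels rels, FreeGroup.lift f r = 1 := by
  rintro _ ⟨w₁, w₂, h, rfl⟩
  rw [map_mul, map_inv, lift_iotaFG, lift_iotaFG, hf w₁ w₂ h, inv_mul_cancel]

theorem respectsRels_of (rels : FreeMonoid α → FreeMonoid α → Prop) :
    RespectsRels rels (PresentedGroup.of : α → PresentedGroup (grels rels)) := by
  intro w₁ w₂ h
  have hmk : ∀ w, FreeMonoid.lift (PresentedGroup.of : α → PresentedGroup (grels rels)) w
      = PresentedGroup.mk _ (iotaFG α w) := fun w => by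
    rw [iotaFG, ← MonoidHom.comp_apply, FreeMonoid.comp_lift]
    rfl
  rw [hmk, hmk]
  exact PresentedGroup.mk_eq_mk_of_inv_mul_mem ⟨w₁, w₂, h, rfl⟩

end Presentation

variable {m n : ℕ}

section Relations

variable {H : Type*} [Group H] (f : Gen m n → H)

def tProd : H := (List.ofFn fun i => f (.t i)).prod

def uProd : H := (List.ofFn fun j => f (.u j)).prod

theorem map_tProd {K : Type*} [Group K] (F : H →* K) : F (tProd f) = tProd (F ∘ f) := by
  rw [tProd, map_list_prod, List.map_ofFn]
  rfl

theorem map_uProd {K : Type*} [Group K] (F : H →* K) : F (uProd f) = uProd (F ∘ f) := by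
  rw [uProd, map_list_prod, List.map_ofFn]
  rfl

theorem lift_wordT : FreeMonoid.lift f (FreeMonoid.ofList (wordT m n)) = f .s * tProd f := by
  rw [FreeMonoid.lift_ofList, wordT, List.map_cons, List.prod_cons, List.map_ofFn]
  rfl

theorem lift_wordU : FreeMonoid.lift f (FreeMonoid.ofList (wordU m n)) = f .s * uProd f := by
  rw [FreeMonoid.lift_ofList, wordU, List.map_cons, List.prod_cons, List.map_ofFn]
  rfl

theorem respectsRels_iff : RespectsRels (Rel m n) f ↔
    (∀ g ∈ wordT m n, Commute (f g) (f .s * tProd f)) ∧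
      (∀ g ∈ wordU m n, Commute (f g) (f .s * uProd f)) ∧
      ∀ i j, Commute (f (.t i)) (f (.u j)) := by
  have rotate_iff : ∀ l : List (Gen m n),
      (∀ j, FreeMonoid.lift f (.ofList (l.rotate j)) = FreeMonoid.lift f (.ofList l)) ↔
        ∀ g ∈ l, Commute (f g) (FreeMonoid.lift f (.ofList l)) := by
    intro l
    simp only [FreeMonoid.lift_ofList, List.map_rotate, List.prod_rotate_eq_prod_iff,
      List.forall_mem_map]
  rw [← lift_wordT, ← lift_wordU, ← rotate_iff, ← rotate_iff]
  constructor
  · intro h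
    refine ⟨fun j => (h _ _ (.rotT j)).symm, fun j => (h _ _ (.rotU j)).symm, fun i j => ?_⟩
    simpa [Commute, SemiconjBy] using h _ _ (.comm i j)
  · rintro ⟨hT, hU, htu⟩ _ _ (j | j | ⟨i, j⟩)
    · exact (hT j).symm
    · exact (hU j).symm
    · simpa using (htu i j).eq

variable {f}

theorem commute_t_u (hf : RespectsRels (Rel m n) f) (i : Fin m) (j : Fin n) :
    Commute (f (.t i)) (f (.u j)) :=
  ((respectsRels_iff f).mp hf).2.2 i j

theorem commute_t_uProd (hf : RespectsRels (Rel m n) f) (i : Fin m) :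
    Commute (f (.t i)) (uProd f) :=
  Commute.list_prod_right _ _ (by simp [commute_t_u hf i])

theorem commute_u_tProd (hf : RespectsRels (Rel m n) f) (j : Fin n) :
    Commute (f (.u j)) (tProd f) :=
  Commute.list_prod_right _ _ (by simp [fun i => (commute_t_u hf i j).symm])

theorem commute_tProd_uProd (hf : RespectsRels (Rel m n) f) : Commute (tProd f) (uProd f) :=
  Commute.list_prod_left _ _ (by simp [commute_t_uProd hf])

theorem commute_delta (hf : RespectsRels (Rel m n) f) (g : Gen m n) :
    Commute (f g) (f .s * tProd f * uProd f) := by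
  obtain ⟨hT, hU, -⟩ := (respectsRels_iff f).mp hf
  cases g with
  | s =>
    have hΔ : f .s * tProd f * uProd f = f .s * tProd f * ((f .s)⁻¹ * (f .s * uProd f)) := by
      group
    rw [hΔ]
    exact (hT _ (by simp [wordT])).mul_right
      ((Commute.refl _).inv_right.mul_right (hU _ (by simp [wordU])))
  | t i => exact (hT _ (by simp [wordT])).mul_right (commute_t_uProd hf i)
  | u j =>
    rw [mul_assoc, (commute_tProd_uProd hf).eq, ← mul_assoc]
    exact (hU _ (by simp [wordU])).mul_right (commute_u_tProd hf j)

end Relations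

def genProd (k : ℕ) : FreeGroup (Fin k) := (List.ofFn FreeGroup.of).prod

theorem map_genProd {k : ℕ} {M : Type*} [Monoid M] (F : FreeGroup (Fin k) →* M) :
    F (genProd k) = (List.ofFn fun i => F (FreeGroup.of i)).prod := by
  rw [genProd, map_list_prod, List.map_ofFn]
  rfl

abbrev IntProdFree (m n : ℕ) : Type := Multiplicative ℤ × (FreeGroup (Fin m) × FreeGroup (Fin n))

def genImage : Gen m n → IntProdFree m n
  | .s => (.ofAdd 1, (genProd m)⁻¹, (genProd n)⁻¹)
  | .t i => (1, FreeGroup.of i, 1)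
  | .u j => (1, 1, FreeGroup.of j)

theorem tProd_genImage : tProd (genImage (m := m) (n := n)) = (1, genProd m, 1) :=
  (map_genProd
    ((MonoidHom.inr (Multiplicative ℤ) _).comp (MonoidHom.inl _ (FreeGroup (Fin n))))).symm

theorem uProd_genImage : uProd (genImage (m := m) (n := n)) = (1, 1, genProd n) :=
  (map_genProd
    ((MonoidHom.inr (Multiplicative ℤ) _).comp (MonoidHom.inr (FreeGroup (Fin m)) _))).symm

theorem respectsRels_genImage : RespectsRels (Rel m n) (genImage (m := m) (n := n)) := by
  refine (respectsRels_iff _).mpr ⟨?_, ?_, fun i j => ?_⟩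
  · rintro (_ | i | j) hg
    all_goals simp_all [wordT, genImage, tProd_genImage, Commute, SemiconjBy]
  · rintro (_ | i | j) hg
    all_goals simp_all [wordU, genImage, uProd_genImage, Commute, SemiconjBy]
  · simp [genImage, Commute, SemiconjBy]

def toIntProdFree : G m n →* IntProdFree m n :=
  PresentedGroup.toGroup (lift_eq_one_of_mem_grels respectsRels_genImage)

theorem toIntProdFree_of (g : Gen m n) :
    toIntProdFree (PresentedGroup.of g) = genImage g :=
  PresentedGroup.toGroup.of _

def delta : G m n :=
  PresentedGroup.of .s * tProd PresentedGroup.of * uProd PresentedGroup.of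

theorem delta_mem_center : (delta : G m n) ∈ Subgroup.center (G m n) :=
  PresentedGroup.mem_center_of_forall_commute_of (commute_delta (respectsRels_of _))

def tHom : FreeGroup (Fin m) →* G m n := FreeGroup.lift fun i => PresentedGroup.of (.t i)

def uHom : FreeGroup (Fin n) →* G m n := FreeGroup.lift fun j => PresentedGroup.of (.u j)

def ofIntProdFree : IntProdFree m n →* G m n :=
  (zpowersHom _ delta).noncommCoprod
    (tHom.noncommCoprod uHom
      (FreeGroup.commute_lift_lift (commute_t_u (respectsRels_of _))))
    fun k _ => Commute.zpow_left (Subgroup.mem_center_iff.mp delta_mem_center _).symm k.toAdd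

theorem ofIntProdFree_apply (k : Multiplicative ℤ) (a : FreeGroup (Fin m))
    (b : FreeGroup (Fin n)) : ofIntProdFree (k, a, b) = delta ^ k.toAdd * (tHom a * uHom b) :=
  rfl

theorem tHom_genProd : tHom (genProd m) = tProd (PresentedGroup.of : Gen m n → G m n) := by
  rw [map_genProd]
  simp [tHom, tProd]

theorem uHom_genProd : uHom (genProd n) = uProd (PresentedGroup.of : Gen m n → G m n) := by
  rw [map_genProd]
  simp [uHom, uProd]

theorem ofIntProdFree_comp_toIntProdFree :
    ofIntProdFree.comp toIntProdFree = MonoidHom.id (G m n) := by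
  refine PresentedGroup.ext fun g => ?_
  rw [MonoidHom.comp_apply, toIntProdFree_of]
  cases g with
  | s =>
    rw [genImage, ofIntProdFree_apply, map_inv, map_inv, tHom_genProd, uHom_genProd,
      toAdd_ofAdd, zpow_one, delta, mul_assoc (PresentedGroup.of _),
      (commute_tProd_uProd (respectsRels_of _)).eq, MonoidHom.id_apply]
    group
  | t i => simp [genImage, ofIntProdFree_apply, tHom]
  | u j => simp [genImage, ofIntProdFree_apply, uHom]

theorem toIntProdFree_delta :
    toIntProdFree (delta : G m n) = (.ofAdd 1, 1, 1) := by
  have h : toIntProdFree ∘ PresentedGroup.of = (genImage : Gen m n → IntProdFree m n) :=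
    funext toIntProdFree_of
  rw [delta, map_mul, map_mul, map_tProd, map_uProd, toIntProdFree_of, h, tProd_genImage,
    uProd_genImage]
  simp [genImage]

theorem toIntProdFree_tHom (a : FreeGroup (Fin m)) :
    toIntProdFree (tHom (n := n) a) = (1, a, 1) := by
  have h : toIntProdFree.comp (tHom (m := m) (n := n))
      = (MonoidHom.inr (Multiplicative ℤ) _).comp (MonoidHom.inl _ (FreeGroup (Fin n))) :=
    FreeGroup.ext_hom _ _ fun i => by simp [tHom, toIntProdFree_of, genImage]
  exact DFunLike.congr_fun h a

theorem toIntProdFree_uHom (b : FreeGroup (Fin n)) :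
    toIntProdFree (uHom (m := m) b) = (1, 1, b) := by
  have h : toIntProdFree.comp (uHom (m := m) (n := n))
      = (MonoidHom.inr (Multiplicative ℤ) _).comp (MonoidHom.inr (FreeGroup (Fin m)) _) :=
    FreeGroup.ext_hom _ _ fun j => by simp [uHom, toIntProdFree_of, genImage]
  exact DFunLike.congr_fun h b

theorem toIntProdFree_comp_ofIntProdFree :
    toIntProdFree.comp ofIntProdFree = MonoidHom.id (IntProdFree m n) := by
  refine MonoidHom.ext fun ⟨k, a, b⟩ => ?_
  rw [MonoidHom.comp_apply, ofIntProdFree_apply, map_mul, map_mul, map_zpow, toIntProdFree_delta,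
    toIntProdFree_tHom, toIntProdFree_uHom]
  simp [← ofAdd_zsmul]

theorem G_iso_int_prod_free_general (m n : ℕ) :
    Nonempty (G m n ≃* (Multiplicative ℤ × (FreeGroup (Fin m) × FreeGroup (Fin n)))) :=
  ⟨MonoidHom.toMulEquiv toIntProdFree ofIntProdFree ofIntProdFree_comp_toIntProdFree
    toIntProdFree_comp_ofIntProdFree⟩

/-- For `m, n ≥ 1`, the group `G_{m,n}` is isomorphic to `ℤ × F_m × F_n`, where `F_m`, `F_n`
are free groups of ranks `m` and `n`. -/
theorem G_iso_int_prod_free (m n : ℕ) (hm : 1 ≤ m) (hn : 1 ≤ n) :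
    Nonempty (G m n ≃* (Multiplicative ℤ × (FreeGroup (Fin m) × FreeGroup (Fin n)))) :=
  G_iso_int_prod_free_general m n

end Gmn
end

section
/- For integers m, n ≥ 1, in the monoid G⁺_{m,n} presented by generators s, t_1, …, t_m, u_1, …, u_n subject to all cyclic rotations of s·t_1⋯t_m being equal, all cyclic rotations of s·u_1⋯u_n being equal, and t_i·u_j = u_j·t_i for all i, j, all cyclic rotations of the word s·t_1⋯t_m·u_1⋯u_n are equal to one another (the cyclic relations [s, t_1, …, t_m, u_1, …, u_n] hold). -/
namespace PresentedMonoid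

theorem mk_ofList {α : Type*} (rels : FreeMonoid α → FreeMonoid α → Prop) (l : List α) :
    mk rels (FreeMonoid.ofList l) = (l.map (of rels)).prod := by
  induction l with
  | nil => rfl
  | cons x l ih => simp [FreeMonoid.ofList_cons, ih, of]

end PresentedMonoid

section CyclicRelations

variable {M : Type*} [Monoid M]

def CyclicRelations (l : List M) : Prop := ∀ k, (l.rotate k).prod = l.prod

theorem cyclicRelations_iff {l : List M} :
    CyclicRelations l ↔ ∀ a b, l = a ++ b → (b ++ a).prod = l.prod := by
  constructor
  · rintro h a b rfl
    rw [← List.rotate_append_length_eq]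
    exact h _
  · intro h k
    rw [List.rotate_eq_drop_append_take_mod]
    exact h _ _ (List.take_append_drop _ _).symm

theorem cyclicRelations_cons_iff {s : M} {l : List M} :
    CyclicRelations (s :: l) ↔ ∀ a b, l = a ++ b → b.prod * (s * a.prod) = s * l.prod := by
  rw [cyclicRelations_iff]
  constructor
  · rintro h a b rfl
    simpa using h (s :: a) b rfl
  · intro h a b hab
    rcases List.cons_eq_append_iff.1 hab with ⟨rfl, rfl⟩ | ⟨a', rfl, rfl⟩
    · simp
    · simpa [mul_assoc] using h a' b rfl

theorem CyclicRelations.commute_prod {s : M} {l : List M} (h : CyclicRelations (s :: l)) :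
    Commute s l.prod := by
  have h₀ := cyclicRelations_cons_iff.1 h [] l rfl
  rw [List.prod_nil, mul_one] at h₀
  exact h₀.symm

theorem CyclicRelations.cons_append {s : M} {P Q : List M} (hP : CyclicRelations (s :: P))
    (hQ : CyclicRelations (s :: Q)) (hPQ : ∀ p ∈ P, ∀ q ∈ Q, Commute p q) :
    CyclicRelations (s :: (P ++ Q)) := by
  have hsP := hP.commute_prod
  have hsQ := hQ.commute_prod
  rw [cyclicRelations_cons_iff] at *
  have hcomm {a b : List M} (ha : a ⊆ P) (hb : b ⊆ Q) : Commute a.prod b.prod :=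
    .list_prod_left _ _ fun p hp => .list_prod_right _ _ fun q hq => hPQ p (ha hp) q (hb hq)
  intro x y hxy
  rcases List.append_eq_append_iff.1 hxy with ⟨a, rfl, rfl⟩ | ⟨c, rfl, rfl⟩
  · -- the cut falls in `Q = a ++ y`
    have hyP : Commute y.prod P.prod :=
      (hcomm (List.Subset.refl P) (List.subset_append_right a y)).symm
    simp only [List.prod_append]
    calc y.prod * (s * (P.prod * a.prod))
        = P.prod * (y.prod * (s * a.prod)) := by rw [hsP.left_comm, hyP.left_comm]
      _ = s * (P.prod * (a.prod * y.prod)) := by rw [hQ a y rfl, hsP.left_comm, List.prod_append]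
  · -- the cut falls in `P = x ++ c`
    have hxQ : Commute x.prod Q.prod := hcomm (List.subset_append_left x c) (List.Subset.refl Q)
    simp only [List.prod_append]
    calc (c.prod * Q.prod) * (s * x.prod)
        = (c.prod * (s * x.prod)) * Q.prod := by
          rw [mul_assoc, ← hsQ.left_comm, ← hxQ.eq, ← mul_assoc s, ← mul_assoc]
      _ = s * (x.prod * c.prod * Q.prod) := by
          rw [hP x c rfl, List.prod_append, mul_assoc]

end CyclicRelations

namespace Gmn

variable {m n : ℕ}

theorem cyclicRelations_wordT : CyclicRelations ((wordT m n).map gen) := fun k => by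
  rw [← List.map_rotate, ← PresentedMonoid.mk_ofList, ← PresentedMonoid.mk_ofList]
  exact (PresentedMonoid.mk_eq_mk_of_rel (Rel.rotT k)).symm

theorem cyclicRelations_wordU : CyclicRelations ((wordU m n).map gen) := fun k => by
  rw [← List.map_rotate, ← PresentedMonoid.mk_ofList, ← PresentedMonoid.mk_ofList]
  exact (PresentedMonoid.mk_eq_mk_of_rel (Rel.rotU k)).symm

theorem commute_gen_t_gen_u (i : Fin m) (j : Fin n) : Commute (gen (Gen.t i)) (gen (Gen.u j)) :=
  PresentedMonoid.mk_eq_mk_of_rel (Rel.comm i j)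

theorem cyclic_relations_full_general (m n : ℕ) : ∀ j : ℕ,
    PresentedMonoid.mk (Rel m n) (FreeMonoid.ofList (wordFull m n)) =
    PresentedMonoid.mk (Rel m n) (FreeMonoid.ofList ((wordFull m n).rotate j)) := by
  have h : CyclicRelations ((wordFull m n).map gen) := by
    simpa [wordT, wordU, wordFull] using cyclicRelations_wordT.cons_append cyclicRelations_wordU
      (by simp [commute_gen_t_gen_u])
  intro j
  rw [PresentedMonoid.mk_ofList, PresentedMonoid.mk_ofList, List.map_rotate]
  exact (h j).symm

/-- For `m, n ≥ 1`, in the monoid `G⁺_{m,n}` all cyclic rotations of the word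
`s · t_1 ⋯ t_m · u_1 ⋯ u_n` are equal to one another: the cyclic relations
`[s, t_1, …, t_m, u_1, …, u_n]` hold. -/
theorem cyclic_relations_full (m n : ℕ) (hm : 1 ≤ m) (hn : 1 ≤ n) : ∀ j : ℕ,
    PresentedMonoid.mk (Rel m n) (FreeMonoid.ofList (wordFull m n)) =
    PresentedMonoid.mk (Rel m n) (FreeMonoid.ofList ((wordFull m n).rotate j)) :=
  cyclic_relations_full_general m n

end Gmn
end

section
/- For integers m, n ≥ 1, the element Δ := s·t_1⋯t_m·u_1⋯u_n of the monoid G⁺_{m,n} is a fundamental element: there is a permutation σ of the generating set {s, t_1, …, t_m, u_1, …, u_n} such that for every generator g there exists Δ_g ∈ G⁺_{m,n} with Δ = g·Δ_g = Δ_g·σ(g). -/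
/-!
`Δ = (s·T)·U = (s·U)·T`, where `T = t_1⋯t_m` and `U = u_1⋯u_n` commute letter by letter.
The value of `s·T` is invariant under cyclic rotation, so rotating its letter `g` from the
front to the back gives `s·T = g·c = c·g`; as `g` commutes with `U`, also
`Δ = g·(c·U) = (c·U)·g`.
The same argument applies to `s·U` and the letters `u_j`. So `Δ` commutes with every
generator and `σ` can be taken to be the identity.
-/

section RotationInvariantProduct

variable {M : Type*} [Monoid M]

theorem List.exists_prod_eq_mul_eq_mul_of_mem {L : List M}
    (hrot : ∀ k, (L.rotate k).prod = L.prod) {g : M} (hg : g ∈ L) :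
    ∃ c, L.prod = g * c ∧ L.prod = c * g := by
  obtain ⟨a, b, rfl⟩ := List.append_of_mem hg
  refine ⟨(b ++ a).prod, ?_, ?_⟩
  · rw [← hrot a.length, List.rotate_append_length_eq, List.cons_append, List.prod_cons]
  · have hsplit : a ++ g :: b = (a ++ [g]) ++ b := by simp
    have hlen : (a ++ [g]).length = a.length + 1 := by simp
    rw [← hrot (a.length + 1), hsplit, ← hlen, List.rotate_append_length_eq]
    simp [List.prod_append, mul_assoc]

theorem List.commute_prod_of_rotate_one {s : M} {l : List M}
    (h : ((s :: l).rotate 1).prod = (s :: l).prod) : Commute s l.prod := by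
  have hcomm : s * l.prod = l.prod * s := by
    simpa [List.rotate_cons_succ, List.prod_append, eq_comm] using h
  exact hcomm

theorem List.exists_prod_cons_append_eq_mul_eq_mul_of_mem_cons {s : M} {a b : List M}
    (ha : ∀ k, ((s :: a).rotate k).prod = (s :: a).prod) (hsb : Commute s b.prod)
    (hab : ∀ x ∈ a, Commute x b.prod) {g : M} (hg : g ∈ s :: a) :
    ∃ c, (s :: (a ++ b)).prod = g * c ∧ (s :: (a ++ b)).prod = c * g := by
  obtain ⟨c, hl, hr⟩ := List.exists_prod_eq_mul_eq_mul_of_mem ha hg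
  have hgb : Commute g b.prod := by
    rcases List.mem_cons.1 hg with rfl | hg
    exacts [hsb, hab g hg]
  refine ⟨c * b.prod, ?_, ?_⟩
  · rw [← List.cons_append, List.prod_append, hl, mul_assoc]
  · rw [← List.cons_append, List.prod_append, hr, mul_assoc, hgb.eq, ← mul_assoc]

theorem List.exists_prod_cons_append_eq_mul_eq_mul_of_mem {s : M} {a b : List M}
    (ha : ∀ k, ((s :: a).rotate k).prod = (s :: a).prod)
    (hb : ∀ k, ((s :: b).rotate k).prod = (s :: b).prod)
    (hab : ∀ x ∈ a, ∀ y ∈ b, Commute x y) {g : M} (hg : g ∈ s :: (a ++ b)) :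
    ∃ c, (s :: (a ++ b)).prod = g * c ∧ (s :: (a ++ b)).prod = c * g := by
  have hxb : ∀ x ∈ a, Commute x b.prod := fun x hx => .list_prod_right _ _ (hab x hx)
  have hya : ∀ y ∈ b, Commute y a.prod := fun y hy =>
    .list_prod_right _ _ fun x hx => (hab x hx y hy).symm
  rcases List.mem_cons.1 hg with rfl | hg
  · exact exists_prod_cons_append_eq_mul_eq_mul_of_mem_cons ha
      (commute_prod_of_rotate_one (hb 1)) hxb (mem_cons_self ..)
  rcases List.mem_append.1 hg with hg | hg
  · exact exists_prod_cons_append_eq_mul_eq_mul_of_mem_cons ha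
      (commute_prod_of_rotate_one (hb 1)) hxb (mem_cons_of_mem _ hg)
  · have hswap : (s :: (a ++ b)).prod = (s :: (b ++ a)).prod := by
      simp only [prod_cons, prod_append, (Commute.list_prod_left _ _ hxb).eq]
    rw [hswap]
    exact exists_prod_cons_append_eq_mul_eq_mul_of_mem_cons hb
      (commute_prod_of_rotate_one (ha 1)) hya (mem_cons_of_mem _ hg)

end RotationInvariantProduct

namespace Gmn

section Words

variable {m n : ℕ}

theorem mk_ofList (L : List (Gen m n)) :
    PresentedMonoid.mk (Rel m n) (FreeMonoid.ofList L) = (L.map gen).prod := by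
  induction L with
  | nil => rfl
  | cons g L ih => rw [FreeMonoid.ofList_cons, map_mul, ih]; rfl

def tGens (m n : ℕ) : List (GP m n) := List.ofFn fun i => gen (Gen.t i)

def uGens (m n : ℕ) : List (GP m n) := List.ofFn fun j => gen (Gen.u j)

theorem prod_rotate_cons_tGens (k : ℕ) :
    ((gen Gen.s :: tGens m n).rotate k).prod = (gen Gen.s :: tGens m n).prod := by
  have h : (wordT m n).map gen = gen Gen.s :: tGens m n := by
    simp [wordT, tGens, List.map_ofFn, Function.comp_def]
  rw [← h, ← List.map_rotate, ← mk_ofList, ← mk_ofList]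
  exact (PresentedMonoid.mk_eq_mk_of_rel (Rel.rotT k)).symm

theorem prod_rotate_cons_uGens (k : ℕ) :
    ((gen Gen.s :: uGens m n).rotate k).prod = (gen Gen.s :: uGens m n).prod := by
  have h : (wordU m n).map gen = gen Gen.s :: uGens m n := by
    simp [wordU, uGens, List.map_ofFn, Function.comp_def]
  rw [← h, ← List.map_rotate, ← mk_ofList, ← mk_ofList]
  exact (PresentedMonoid.mk_eq_mk_of_rel (Rel.rotU k)).symm

theorem commute_of_mem_tGens_of_mem_uGens :
    ∀ x ∈ tGens m n, ∀ y ∈ uGens m n, Commute x y := by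
  simp only [tGens, uGens, List.mem_ofFn', Set.forall_mem_range]
  intro i j
  have h := PresentedMonoid.mk_eq_mk_of_rel (Rel.comm i j)
  rw [map_mul, map_mul] at h
  exact h

theorem Delta_eq_prod : Delta m n = (gen Gen.s :: (tGens m n ++ uGens m n)).prod := by
  rw [Delta, mk_ofList]
  simp only [wordFull, tGens, uGens, List.map_cons, List.map_append, List.map_ofFn,
    Function.comp_def]

theorem gen_mem_cons_tGens_append_uGens (g : Gen m n) :
    gen g ∈ gen Gen.s :: (tGens m n ++ uGens m n) := by
  cases g <;> simp [tGens, uGens, List.mem_ofFn']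

end Words

theorem delta_fundamental_general (m n : ℕ) :
    ∃ σ : Equiv.Perm (Gen m n), ∀ g : Gen m n,
      ∃ Δg : GP m n, Delta m n = gen g * Δg ∧ Delta m n = Δg * gen (σ g) := by
  refine ⟨Equiv.refl _, fun g => ?_⟩
  rw [Delta_eq_prod]
  exact List.exists_prod_cons_append_eq_mul_eq_mul_of_mem prod_rotate_cons_tGens
    prod_rotate_cons_uGens commute_of_mem_tGens_of_mem_uGens (gen_mem_cons_tGens_append_uGens g)

/-- For `m, n ≥ 1`, the element `Δ = s · t_1 ⋯ t_m · u_1 ⋯ u_n` of `G⁺_{m,n}` is a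
fundamental element: there is a permutation `σ` of the generating set such that for every
generator `g` there exists `Δ_g` with `Δ = g·Δ_g = Δ_g·σ(g)`. -/
theorem delta_fundamental (m n : ℕ) (hm : 1 ≤ m) (hn : 1 ≤ n) :
    ∃ σ : Equiv.Perm (Gen m n), ∀ g : Gen m n,
      ∃ Δg : GP m n, Delta m n = gen g * Δg ∧ Delta m n = Δg * gen (σ g) :=
  delta_fundamental_general m n

end Gmn
end

section
/- For all integers m, n ≥ 1, the monoid G⁺_{m,n} is cancellative: for all A, B, X, Y ∈ G⁺_{m,n}, A·X·B = A·Y·B implies X = Y. -/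
namespace PresentedMonoid

variable {α : Type*} {rels : FreeMonoid α → FreeMonoid α → Prop}

variable (rels) in
def RewriteStep (x y : List α) : Prop :=
  ∃ (p q : List α) (A B : FreeMonoid α), (rels A B ∨ rels B A) ∧
    x = p ++ A.toList ++ q ∧ y = p ++ B.toList ++ q

theorem RewriteStep.symm {x y : List α} (h : RewriteStep rels x y) : RewriteStep rels y x :=
  let ⟨p, q, A, B, hAB, hx, hy⟩ := h
  ⟨p, q, B, A, hAB.symm, hy, hx⟩

theorem reflTransGen_rewriteStep_symm {x y : List α}
    (h : Relation.ReflTransGen (RewriteStep rels) x y) :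
    Relation.ReflTransGen (RewriteStep rels) y x := by
  induction h with
  | refl => rfl
  | tail _ hstep ih => exact .head hstep.symm ih

theorem RewriteStep.append {x y : List α} (h : RewriteStep rels x y) (c d : List α) :
    RewriteStep rels (c ++ x ++ d) (c ++ y ++ d) :=
  let ⟨p, q, A, B, hAB, hx, hy⟩ := h
  ⟨c ++ p, q ++ d, A, B, hAB, by simp [hx], by simp [hy]⟩

theorem mk_eq_mk_iff_reflTransGen {x y : List α} :
    mk rels (.ofList x) = mk rels (.ofList y) ↔
      Relation.ReflTransGen (RewriteStep rels) x y := by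
  constructor
  · intro h
    have key : ∀ A B : FreeMonoid α, ConGen.Rel rels A B →
        Relation.ReflTransGen (RewriteStep rels) A.toList B.toList := by
      intro A B hAB
      induction hAB with
      | of A B hAB => exact .single ⟨[], [], A, B, .inl hAB, by simp, by simp⟩
      | refl => exact .refl
      | symm _ ih => exact reflTransGen_rewriteStep_symm ih
      | trans _ _ ih₁ ih₂ => exact ih₁.trans ih₂
      | mul _ _ ih₁ ih₂ =>
        refine (ih₁.lift (· ++ _) fun _ _ h => ?_).trans (ih₂.lift (_ ++ ·) fun _ _ h => ?_)
        · simpa using h.append [] _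
        · simpa using h.append _ []
    exact key _ _ (mk_eq_mk_iff.mp h)
  · intro h
    induction h with
    | refl => rfl
    | tail _ hstep ih =>
      obtain ⟨p, q, A, B, hAB, rfl, rfl⟩ := hstep
      have hAB' : mk rels A = mk rels B := hAB.elim mk_eq_mk_of_rel fun h => (mk_eq_mk_of_rel h).symm
      simp only [FreeMonoid.ofList_append, FreeMonoid.ofList_toList, map_mul] at ih ⊢
      rw [ih, hAB']

theorem prod_map_of (w : List α) : (w.map (of rels)).prod = mk rels (.ofList w) := by
  induction w with
  | nil => rfl
  | cons x w ih => rw [List.map_cons, List.prod_cons, ih, FreeMonoid.ofList_cons, map_mul]; rfl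

theorem prod_map_mk_toList {β : Type*} {rels' : FreeMonoid β → FreeMonoid β → Prop}
    (σ : α → Option β) (w : List α) :
    (w.map fun x => mk rels' (.ofList (σ x).toList)).prod = mk rels' (.ofList (w.filterMap σ)) := by
  induction w with
  | nil => rfl
  | cons x w ih =>
    rw [List.map_cons, List.prod_cons, ih]
    cases h : σ x <;> simp [h, FreeMonoid.ofList_cons]

variable {β : Type*} {rels' : FreeMonoid β → FreeMonoid β → Prop}

def filterMapHom (σ : α → Option β)
    (h : ∀ a b, rels a b → mk rels' (.ofList (a.toList.filterMap σ)) =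
      mk rels' (.ofList (b.toList.filterMap σ))) :
    PresentedMonoid rels →* PresentedMonoid rels' :=
  PresentedMonoid.lift (fun x => mk rels' (.ofList (σ x).toList)) fun a b hab => by
    simpa only [FreeMonoid.lift_apply, prod_map_mk_toList] using h a b hab

theorem filterMapHom_mk (σ : α → Option β)
    (h : ∀ a b, rels a b → mk rels' (.ofList (a.toList.filterMap σ)) =
      mk rels' (.ofList (b.toList.filterMap σ))) (w : List α) :
    filterMapHom σ h (mk rels (.ofList w)) = mk rels' (.ofList (w.filterMap σ)) :=
  (FreeMonoid.lift_ofList _ w).trans (prod_map_mk_toList σ w)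

end PresentedMonoid

namespace CycMonoid

variable {k : ℕ}

variable (k) in
def cycWord (i : ℕ) : List (Fin k) := (List.finRange k).rotate i

variable (k) in
inductive CycRel : FreeMonoid (Fin k) → FreeMonoid (Fin k) → Prop
  | rotate (i j : ℕ) : CycRel (.ofList (cycWord k i)) (.ofList (cycWord k j))

end CycMonoid

abbrev CycMonoid (k : ℕ) := PresentedMonoid (CycMonoid.CycRel k)

namespace CycMonoid

open PresentedMonoid Relation

variable {k : ℕ}

variable (k) in
abbrev Chain : List (Fin k) → List (Fin k) → Prop := ReflTransGen (RewriteStep (CycRel k))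

theorem rewriteStep_iff {x y : List (Fin k)} :
    RewriteStep (CycRel k) x y ↔
      ∃ (p q : List (Fin k)) (i j : ℕ), x = p ++ cycWord k i ++ q ∧ y = p ++ cycWord k j ++ q := by
  constructor
  · rintro ⟨p, q, A, B, ⟨i, j⟩ | ⟨i, j⟩, rfl, rfl⟩
    exacts [⟨p, q, i, j, rfl, rfl⟩, ⟨p, q, j, i, rfl, rfl⟩]
  · rintro ⟨p, q, i, j, rfl, rfl⟩
    exact ⟨p, q, _, _, .inl (.rotate i j), rfl, rfl⟩

theorem length_eq_of_rewriteStep {x y : List (Fin k)} (h : RewriteStep (CycRel k) x y) :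
    x.length = y.length := by
  obtain ⟨p, q, i, j, rfl, rfl⟩ := rewriteStep_iff.mp h
  simp [cycWord]

theorem Chain.append_left {x y : List (Fin k)} (h : Chain k x y) (c : List (Fin k)) :
    Chain k (c ++ x) (c ++ y) :=
  h.lift (c ++ ·) fun _ _ h => by simpa using h.append c []

def cycTail (a : Fin k) : List (Fin k) := (cycWord k a).tail

theorem exists_cycWord_eq_cons (hk : 0 < k) (i : ℕ) : ∃ a, cycWord k i = a :: cycTail a := by
  refine ⟨⟨i % k, Nat.mod_lt i hk⟩, ?_⟩
  have hne : cycWord k (i % k) ≠ [] := by simp [cycWord, hk.ne']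
  have hhead : (cycWord k (i % k)).head hne = ⟨i % k, Nat.mod_lt i hk⟩ := by
    rw [List.head_eq_getElem]
    simp [cycWord, List.getElem_rotate]
  have hmod : cycWord k (i % k) = cycWord k i := by
    simpa [cycWord] using List.rotate_mod (List.finRange k) i
  rw [cycTail, Fin.val_mk, ← hmod, ← hhead, List.cons_head_tail hne]

theorem length_cycTail (a : Fin k) : (cycTail a).length = k - 1 := by
  simp [cycTail, cycWord]

/-- The two ways in which `a u = b v` can hold in the cyclic monoid. -/
def Division (a : Fin k) (u : List (Fin k)) (b : Fin k) (v : List (Fin k)) : Prop :=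
  (a = b ∧ Chain k u v) ∨ ∃ w, Chain k u (cycTail a ++ w) ∧ Chain k v (cycTail b ++ w)

theorem chain_cancel_left_of_division {n : ℕ}
    (hdiv : ∀ {a b : Fin k} {u v : List (Fin k)}, u.length < n → Chain k (a :: u) (b :: v) →
      Division a u b v)
    {L r r' : List (Fin k)} (hlen : (L ++ r).length ≤ n) (h : Chain k (L ++ r) (L ++ r')) :
    Chain k r r' := by
  induction L with
  | nil => exact h
  | cons g L ih =>
    simp only [List.cons_append, List.length_cons] at h hlen
    rcases hdiv (by omega) h with ⟨-, h'⟩ | ⟨w, h₁, h₂⟩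
    exacts [ih (by omega) h', ih (by omega) (h₁.trans (reflTransGen_rewriteStep_symm h₂))]

theorem division_of_rewriteStep {a b c : Fin k} {u u' v : List (Fin k)}
    (hcancel : ∀ {L r r' : List (Fin k)}, (L ++ r).length ≤ u.length →
      Chain k (L ++ r) (L ++ r') → Chain k r r')
    (hstep : RewriteStep (CycRel k) (a :: u) (c :: u')) (hdiv : Division c u' b v) :
    Division a u b v := by
  obtain ⟨p, q, i, j, hx, hz⟩ := rewriteStep_iff.mp hstep
  rcases p with _ | ⟨d, p⟩
  · obtain ⟨a', ha'⟩ := exists_cycWord_eq_cons a.pos i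
    obtain ⟨c', hc'⟩ := exists_cycWord_eq_cons a.pos j
    rw [List.nil_append, ha', List.cons_append, List.cons.injEq] at hx
    rw [List.nil_append, hc', List.cons_append, List.cons.injEq] at hz
    obtain ⟨rfl, rfl⟩ := hx
    obtain ⟨rfl, rfl⟩ := hz
    rcases hdiv with ⟨rfl, hv⟩ | ⟨w, h₁, h₂⟩
    · exact .inr ⟨q, .refl, reflTransGen_rewriteStep_symm hv⟩
    · have hlen : (cycTail c ++ q).length ≤ (cycTail a ++ q).length := by
        simp [length_cycTail]
      exact .inr ⟨w, (hcancel hlen h₁).append_left _, h₂⟩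
  · simp only [List.cons_append, List.cons.injEq] at hx hz
    obtain ⟨rfl, rfl⟩ := hx
    obtain ⟨rfl, rfl⟩ := hz
    have hstep' : RewriteStep (CycRel k) (p ++ cycWord k i ++ q) (p ++ cycWord k j ++ q) :=
      rewriteStep_iff.mpr ⟨p, q, i, j, rfl, rfl⟩
    rcases hdiv with ⟨rfl, hv⟩ | ⟨w, h₁, h₂⟩
    exacts [.inl ⟨rfl, .head hstep' hv⟩, .inr ⟨w, .head hstep' h₁, h₂⟩]

theorem division_of_chain {a b : Fin k} {u v : List (Fin k)} (h : Chain k (a :: u) (b :: v)) :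
    Division a u b v := by
  -- left cancellation for shorter words enters the proof, hence the strong induction on length
  suffices H : ∀ n {a b : Fin k} {u v : List (Fin k)}, u.length = n →
      Chain k (a :: u) (b :: v) → Division a u b v from H _ rfl h
  intro n
  induction n using Nat.strong_induction_on with
  | _ n IH =>
  intro a b u v hu h
  have hcancel : ∀ {L r r' : List (Fin k)}, (L ++ r).length ≤ n →
      Chain k (L ++ r) (L ++ r') → Chain k r r' :=
    chain_cancel_left_of_division fun hlt h => IH _ hlt rfl h
  generalize hx : a :: u = x at h
  induction h using ReflTransGen.head_induction_on generalizing a u with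
  | refl =>
    obtain ⟨rfl, rfl⟩ := List.cons_eq_cons.mp hx
    exact .inl ⟨rfl, .refl⟩
  | @head x z hstep hchain ih =>
    subst hx
    have hlen := length_eq_of_rewriteStep hstep
    cases z with
    | nil => simp at hlen
    | cons c u' =>
      exact division_of_rewriteStep (hu ▸ hcancel) hstep (ih (by simpa [hu] using hlen.symm) rfl)

theorem chain_cancel_left {L r r' : List (Fin k)} (h : Chain k (L ++ r) (L ++ r')) :
    Chain k r r' :=
  chain_cancel_left_of_division (fun _ => division_of_chain) le_rfl h

variable (k) in
def reverseRev (w : List (Fin k)) : List (Fin k) := w.reverse.map Fin.rev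

theorem reverseRev_append (x y : List (Fin k)) :
    reverseRev k (x ++ y) = reverseRev k y ++ reverseRev k x := by
  simp [reverseRev]

theorem reverseRev_reverseRev (w : List (Fin k)) : reverseRev k (reverseRev k w) = w := by
  simp [reverseRev, List.map_reverse, Function.comp_def]

theorem reverseRev_cycWord (i : ℕ) : reverseRev k (cycWord k i) = cycWord k (k - i % k) := by
  simp [reverseRev, cycWord, List.reverse_rotate, List.map_rotate, List.finRange_reverse,
    Function.comp_def]

theorem rewriteStep_reverseRev {x y : List (Fin k)} (h : RewriteStep (CycRel k) x y) :
    RewriteStep (CycRel k) (reverseRev k x) (reverseRev k y) := by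
  obtain ⟨p, q, i, j, rfl, rfl⟩ := rewriteStep_iff.mp h
  refine rewriteStep_iff.mpr ⟨reverseRev k q, reverseRev k p, k - i % k, k - j % k, ?_, ?_⟩ <;>
    simp only [reverseRev_append, reverseRev_cycWord, List.append_assoc]

theorem chain_cancel_right {L r r' : List (Fin k)} (h : Chain k (r ++ L) (r' ++ L)) :
    Chain k r r' := by
  have h' : Chain k (reverseRev k (r ++ L)) (reverseRev k (r' ++ L)) :=
    h.lift (reverseRev k) fun _ _ => rewriteStep_reverseRev
  rw [reverseRev_append, reverseRev_append] at h'
  have h'' : Chain k (reverseRev k (reverseRev k r)) (reverseRev k (reverseRev k r')) :=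
    (chain_cancel_left h').lift (reverseRev k) fun _ _ => rewriteStep_reverseRev
  rwa [reverseRev_reverseRev, reverseRev_reverseRev] at h''

theorem mk_eq_mk_iff_chain {x y : FreeMonoid (Fin k)} :
    mk (CycRel k) x = mk (CycRel k) y ↔ Chain k x.toList y.toList :=
  mk_eq_mk_iff_reflTransGen

instance : IsCancelMul (CycMonoid k) where
  mul_left_cancel a b c h := by
    induction a, b, c using PresentedMonoid.inductionOn₃ with | _ a b c =>
    dsimp only at h
    rw [← map_mul, ← map_mul, mk_eq_mk_iff_chain, FreeMonoid.toList_mul,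
      FreeMonoid.toList_mul] at h
    exact mk_eq_mk_iff_chain.mpr (chain_cancel_left h)
  mul_right_cancel a b c h := by
    induction a, b, c using PresentedMonoid.inductionOn₃ with | _ a b c =>
    dsimp only at h
    rw [← map_mul, ← map_mul, mk_eq_mk_iff_chain, FreeMonoid.toList_mul,
      FreeMonoid.toList_mul] at h
    exact mk_eq_mk_iff_chain.mpr (chain_cancel_right h)

end CycMonoid

namespace CycMonoid

open PresentedMonoid

variable {M : Type*} [Monoid M] {k l : ℕ} (φ : Fin (k + 1) → M) (χ : Fin (l + 1) → M)

/-- Interleaves `a` and `b`, evaluated by `φ` and `χ`, matching their `0`s in order: each `0` of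
`a` is preceded by the letters of `b` before the next `0` of `b`. -/
def merge : List (Fin (k + 1)) → List (Fin (l + 1)) → M
  | [], b => (b.map χ).prod
  | i :: a, b =>
    if i = 0 then ((b.takeWhile (· != 0)).map χ).prod * φ 0 * merge a (b.dropWhile (· != 0)).tail
    else φ i * merge a b

theorem merge_nil_right (a : List (Fin (k + 1))) : merge φ χ a [] = (a.map φ).prod := by
  induction a with
  | nil => rfl
  | cons i a ih => by_cases hi : i = 0 <;> simp [merge, hi, ih]

theorem merge_append_left {A : List (Fin (k + 1))} (hA : ∀ x ∈ A, x ≠ 0)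
    (a : List (Fin (k + 1))) (b : List (Fin (l + 1))) :
    merge φ χ (A ++ a) b = (A.map φ).prod * merge φ χ a b := by
  induction A with
  | nil => simp
  | cons i A ih =>
    simp only [List.forall_mem_cons] at hA
    simp [merge, hA.1, ih hA.2, mul_assoc]

variable {φ χ}

theorem merge_cons_right (hcomm : ∀ i j, i ≠ 0 → j ≠ 0 → Commute (φ i) (χ j))
    (a : List (Fin (k + 1))) {c : Fin (l + 1)} (hc : c ≠ 0) (b : List (Fin (l + 1))) :
    merge φ χ a (c :: b) = χ c * merge φ χ a b := by
  induction a generalizing b with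
  | nil => simp [merge]
  | cons i a ih =>
    by_cases hi : i = 0
    · simp [merge, hi, hc, mul_assoc]
    · simp only [merge, hi, if_false, ih, ← mul_assoc, (hcomm i c hi hc).eq]

theorem merge_block (hcomm : ∀ i j, i ≠ 0 → j ≠ 0 → Commute (φ i) (χ j))
    {D T : List (Fin (k + 1))} (hD : ∀ x ∈ D, x ≠ 0) (hT : ∀ x ∈ T, x ≠ 0)
    (q : List (Fin (k + 1))) (b : List (Fin (l + 1))) :
    merge φ χ (D ++ 0 :: T ++ q) b = ((b.takeWhile (· != 0)).map χ).prod *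
      ((D ++ 0 :: T).map φ).prod * merge φ χ q (b.dropWhile (· != 0)).tail := by
  have hB : Commute ((D.map φ).prod) ((b.takeWhile (· != 0)).map χ).prod := by
    refine Commute.list_prod_left _ _ fun x hx => Commute.list_prod_right _ _ fun y hy => ?_
    obtain ⟨i, hi, rfl⟩ := List.mem_map.mp hx
    obtain ⟨j, hj, rfl⟩ := List.mem_map.mp hy
    exact hcomm i j (hD i hi) (by simpa using List.mem_takeWhile_imp hj)
  rw [List.append_assoc, merge_append_left φ χ hD, List.cons_append, merge, if_pos rfl,
    merge_append_left φ χ hT]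
  simp only [List.map_append, List.map_cons, List.prod_append, List.prod_cons, ← mul_assoc,
    hB.eq]

theorem exists_cycWord_eq_append_zero_cons (i : ℕ) :
    ∃ D T : List (Fin (k + 1)), cycWord (k + 1) i = D ++ 0 :: T ∧ (∀ x ∈ D, x ≠ 0) ∧
      ∀ x ∈ T, x ≠ 0 := by
  have h0 : (0 : Fin (k + 1)) ∈ cycWord (k + 1) i := List.mem_rotate.mpr (List.mem_finRange _)
  obtain ⟨D, T, hDT⟩ := List.append_of_mem h0
  have hnd : (D ++ 0 :: T).Nodup := hDT ▸ List.nodup_rotate.mpr (List.nodup_finRange _)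
  rw [List.nodup_append, List.nodup_cons] at hnd
  exact ⟨D, T, hDT, fun x hx h => hnd.2.2 x hx 0 (by simp) h, fun x hx h => hnd.2.1.1 (h ▸ hx)⟩

theorem merge_cycWord_append (hcomm : ∀ i j, i ≠ 0 → j ≠ 0 → Commute (φ i) (χ j))
    (hφ : ∀ i, ((cycWord (k + 1) i).map φ).prod = ((List.finRange (k + 1)).map φ).prod)
    (i j : ℕ) (q : List (Fin (k + 1))) (b : List (Fin (l + 1))) :
    merge φ χ (cycWord (k + 1) i ++ q) b = merge φ χ (cycWord (k + 1) j ++ q) b := by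
  obtain ⟨D, T, hi, hD, hT⟩ := exists_cycWord_eq_append_zero_cons (k := k) i
  obtain ⟨D', T', hj, hD', hT'⟩ := exists_cycWord_eq_append_zero_cons (k := k) j
  rw [hi, merge_block hcomm hD hT, hj, merge_block hcomm hD' hT', ← hi, ← hj, hφ, hφ]

theorem merge_eq_of_rewriteStep (hcomm : ∀ i j, i ≠ 0 → j ≠ 0 → Commute (φ i) (χ j))
    (hφ : ∀ i, ((cycWord (k + 1) i).map φ).prod = ((List.finRange (k + 1)).map φ).prod)
    {a a' : List (Fin (k + 1))} (h : RewriteStep (CycRel (k + 1)) a a')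
    (b : List (Fin (l + 1))) : merge φ χ a b = merge φ χ a' b := by
  obtain ⟨p, q, i, j, rfl, rfl⟩ := rewriteStep_iff.mp h
  clear h
  induction p generalizing b with
  | nil => exact merge_cycWord_append hcomm hφ i j q b
  | cons c p ih =>
    simp only [List.cons_append, merge]
    split_ifs <;> rw [ih]

theorem merge_eq_of_mk_eq (hcomm : ∀ i j, i ≠ 0 → j ≠ 0 → Commute (φ i) (χ j))
    (hφ : ∀ i, ((cycWord (k + 1) i).map φ).prod = ((List.finRange (k + 1)).map φ).prod)
    {a a' : List (Fin (k + 1))}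
    (h : mk (CycRel (k + 1)) (.ofList a) = mk (CycRel (k + 1)) (.ofList a'))
    (b : List (Fin (l + 1))) : merge φ χ a b = merge φ χ a' b := by
  obtain hchain := mk_eq_mk_iff_reflTransGen.mp h
  clear h
  induction hchain with
  | refl => rfl
  | tail _ hstep ih => rw [ih, merge_eq_of_rewriteStep hcomm hφ hstep]

theorem merge_comm (hcomm : ∀ i j, i ≠ 0 → j ≠ 0 → Commute (φ i) (χ j)) (h0 : φ 0 = χ 0)
    (a : List (Fin (k + 1))) (b : List (Fin (l + 1))) : merge φ χ a b = merge χ φ b a := by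
  induction b generalizing a with
  | nil => exact merge_nil_right φ χ a
  | cons c b ih =>
    by_cases hc : c = 0
    · subst hc
      have hA : ∀ x ∈ a.takeWhile (· != 0), x ≠ 0 := fun x hx => by
        simpa using List.mem_takeWhile_imp hx
      conv_lhs => rw [← List.takeWhile_append_dropWhile (p := (· != 0)) (l := a)]
      rw [merge_append_left φ χ hA, merge, if_pos rfl, mul_assoc]
      congr 1
      rcases hR : a.dropWhile (· != 0) with _ | ⟨r, R⟩
      · simp [merge, merge_nil_right]
      · have hr : r = 0 := by
          simpa [hR] using List.head_dropWhile_not (· != 0) (l := a) (by simp [hR])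
        simp [merge, hr, ih, h0]
    · rw [merge_cons_right hcomm a hc, ih, merge, if_neg hc]

theorem merge_eq_of_mk_eq_right (hcomm : ∀ i j, i ≠ 0 → j ≠ 0 → Commute (φ i) (χ j))
    (hχ : ∀ j, ((cycWord (l + 1) j).map χ).prod = ((List.finRange (l + 1)).map χ).prod)
    (h0 : φ 0 = χ 0) (a : List (Fin (k + 1))) {b b' : List (Fin (l + 1))}
    (h : mk (CycRel (l + 1)) (.ofList b) = mk (CycRel (l + 1)) (.ofList b')) :
    merge φ χ a b = merge φ χ a b' := by
  rw [merge_comm hcomm h0, merge_comm hcomm h0,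
    merge_eq_of_mk_eq (fun i j hi hj => (hcomm j i hj hi).symm) hχ h]

end CycMonoid

namespace Gmn

open PresentedMonoid CycMonoid

variable {m n : ℕ}

def tLetter : Gen m n → Option (Fin (m + 1))
  | .s => some 0
  | .t i => some i.succ
  | .u _ => none

def uLetter : Gen m n → Option (Fin (n + 1))
  | .s => some 0
  | .t _ => none
  | .u j => some j.succ

def tGen : Fin (m + 1) → Gen m n := Fin.cases .s .t

def uGen : Fin (n + 1) → Gen m n := Fin.cases .s .u

theorem tLetter_tGen (i : Fin (m + 1)) : tLetter (tGen i : Gen m n) = some i := by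
  cases i using Fin.cases <;> rfl

theorem uLetter_uGen (j : Fin (n + 1)) : uLetter (uGen j : Gen m n) = some j := by
  cases j using Fin.cases <;> rfl

theorem map_tGen_finRange : (List.finRange (m + 1)).map tGen = wordT m n := by
  simp [wordT, List.finRange_succ, tGen, List.ofFn_eq_map]

theorem map_uGen_finRange : (List.finRange (n + 1)).map uGen = wordU m n := by
  simp [wordU, List.finRange_succ, uGen, List.ofFn_eq_map]

theorem map_tGen_cycWord (i : ℕ) :
    (cycWord (m + 1) i).map tGen = ((wordT m n).rotate i : List (Gen m n)) := by
  rw [cycWord, List.map_rotate, map_tGen_finRange]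

theorem map_uGen_cycWord (j : ℕ) :
    (cycWord (n + 1) j).map uGen = ((wordU m n).rotate j : List (Gen m n)) := by
  rw [cycWord, List.map_rotate, map_uGen_finRange]

theorem filterMap_tLetter_wordT_rotate (i : ℕ) :
    ((wordT m n).rotate i).filterMap tLetter = cycWord (m + 1) i := by
  rw [← map_tGen_cycWord, List.filterMap_map]
  simp [tLetter_tGen]

theorem filterMap_uLetter_wordU_rotate (j : ℕ) :
    ((wordU m n).rotate j).filterMap uLetter = cycWord (n + 1) j := by
  rw [← map_uGen_cycWord, List.filterMap_map]
  simp [uLetter_uGen]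

theorem filterMap_tLetter_wordU_rotate (j : ℕ) :
    ((wordU m n).rotate j).filterMap tLetter = [0] := by
  refine List.perm_singleton.mp (((wordU m n).rotate_perm j).filterMap tLetter |>.trans ?_)
  simp [wordU, tLetter, List.filterMap_eq_nil_iff]

theorem filterMap_uLetter_wordT_rotate (i : ℕ) :
    ((wordT m n).rotate i).filterMap uLetter = [0] := by
  refine List.perm_singleton.mp (((wordT m n).rotate_perm i).filterMap uLetter |>.trans ?_)
  simp [wordT, uLetter, List.filterMap_eq_nil_iff]

theorem commute_gen_tGen_uGen {i : Fin (m + 1)} {j : Fin (n + 1)} (hi : i ≠ 0) (hj : j ≠ 0) :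
    Commute (gen (tGen i)) (gen (uGen j)) := by
  obtain ⟨i, rfl⟩ := Fin.exists_succ_eq.mpr hi
  obtain ⟨j, rfl⟩ := Fin.exists_succ_eq.mpr hj
  exact mk_eq_mk_of_rel (Rel.comm i j)

theorem prod_map_gen_tGen_cycWord (i : ℕ) :
    ((cycWord (m + 1) i).map fun i => gen (tGen i : Gen m n)).prod =
      ((List.finRange (m + 1)).map fun i => gen (tGen i : Gen m n)).prod := by
  change (List.map (gen ∘ tGen) _).prod = (List.map (gen ∘ tGen) _).prod
  rw [← List.map_map, prod_map_of, ← List.map_map, prod_map_of, map_tGen_cycWord,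
    map_tGen_finRange]
  exact (mk_eq_mk_of_rel (Rel.rotT i)).symm

theorem prod_map_gen_uGen_cycWord (j : ℕ) :
    ((cycWord (n + 1) j).map fun j => gen (uGen j : Gen m n)).prod =
      ((List.finRange (n + 1)).map fun j => gen (uGen j : Gen m n)).prod := by
  change (List.map (gen ∘ uGen) _).prod = (List.map (gen ∘ uGen) _).prod
  rw [← List.map_map, prod_map_of, ← List.map_map, prod_map_of, map_uGen_cycWord,
    map_uGen_finRange]
  exact (mk_eq_mk_of_rel (Rel.rotU j)).symm

theorem mk_eq_merge (w : List (Gen m n)) :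
    mk (Rel m n) (.ofList w) = merge (fun i => gen (tGen i)) (fun j => gen (uGen j))
      (w.filterMap tLetter) (w.filterMap uLetter) := by
  induction w with
  | nil => rfl
  | cons g w ih =>
    change gen g * mk (Rel m n) (.ofList w) = _
    rw [ih]
    cases g with
    | s => simp [tLetter, uLetter, merge, tGen]
    | t i => simp [tLetter, uLetter, List.filterMap_cons, merge, tGen]
    | u j =>
      simp only [tLetter, uLetter, List.filterMap_cons]
      rw [merge_cons_right (fun _ _ => commute_gen_tGen_uGen) _ (Fin.succ_ne_zero j)]
      simp [uGen]

def tShadow : GP m n →* CycMonoid (m + 1) :=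
  filterMapHom tLetter fun a b h => by
    cases h with
    | rotT i =>
      conv_lhs => rw [FreeMonoid.toList_ofList, ← List.rotate_zero (wordT m n)]
      simp only [FreeMonoid.toList_ofList, filterMap_tLetter_wordT_rotate]
      exact mk_eq_mk_of_rel (CycRel.rotate 0 i)
    | rotU j =>
      conv_lhs => rw [FreeMonoid.toList_ofList, ← List.rotate_zero (wordU m n)]
      simp only [FreeMonoid.toList_ofList, filterMap_tLetter_wordU_rotate]
    | comm i j => rfl

def uShadow : GP m n →* CycMonoid (n + 1) :=
  filterMapHom uLetter fun a b h => by
    cases h with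
    | rotT i =>
      conv_lhs => rw [FreeMonoid.toList_ofList, ← List.rotate_zero (wordT m n)]
      simp only [FreeMonoid.toList_ofList, filterMap_uLetter_wordT_rotate]
    | rotU j =>
      conv_lhs => rw [FreeMonoid.toList_ofList, ← List.rotate_zero (wordU m n)]
      simp only [FreeMonoid.toList_ofList, filterMap_uLetter_wordU_rotate]
      exact mk_eq_mk_of_rel (CycRel.rotate 0 j)
    | comm i j => rfl

theorem shadow_injective : Function.Injective ((tShadow (m := m) (n := n)).prod uShadow) := by
  intro x y h
  induction x, y using PresentedMonoid.inductionOn₂ with | _ x y =>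
  rw [← FreeMonoid.ofList_toList x, ← FreeMonoid.ofList_toList y] at h ⊢
  simp only [MonoidHom.prod_apply, Prod.mk.injEq, tShadow, uShadow, filterMapHom_mk] at h
  have hcomm : ∀ i j, i ≠ 0 → j ≠ 0 → Commute (gen (tGen i) : GP m n) (gen (uGen j)) :=
    fun _ _ => commute_gen_tGen_uGen
  rw [mk_eq_merge, mk_eq_merge, merge_eq_of_mk_eq hcomm prod_map_gen_tGen_cycWord h.1,
    merge_eq_of_mk_eq_right hcomm prod_map_gen_uGen_cycWord rfl _ h.2]

instance : IsCancelMul (GP m n) := shadow_injective.isCancelMul _ (map_mul _)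

theorem GP_cancellative_general (m n : ℕ) :
    ∀ A X Y B : GP m n, A * X * B = A * Y * B → X = Y :=
  fun _ _ _ _ h => mul_left_cancel (mul_right_cancel h)

/-- For all `m, n ≥ 1`, the monoid `G⁺_{m,n}` is cancellative:
`A·X·B = A·Y·B` implies `X = Y`. -/
theorem GP_cancellative (m n : ℕ) (hm : 1 ≤ m) (hn : 1 ≤ n) :
    ∀ A X Y B : GP m n, A * X * B = A * Y * B → X = Y :=
  GP_cancellative_general m n

end Gmn
end

section
/- For integers m, n ≥ 1, if the monoid G⁺_{m,n} is left cancellative (a·x = a·y implies x = y for all a, x, y), then it is right cancellative (x·a = y·a implies x = y for all a, x, y). -/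
theorem List.reverse_ofFn {β : Type*} {k : ℕ} (f : Fin k → β) :
    (List.ofFn f).reverse = List.ofFn (fun i => f i.rev) := by
  refine List.ext_getElem (by simp) fun i h₁ h₂ => ?_
  simp only [List.getElem_reverse, List.getElem_ofFn, List.length_ofFn]
  congr 1
  ext
  simp only [Fin.val_rev]
  simp only [List.length_reverse, List.length_ofFn] at h₁
  omega

theorem List.reverse_map_cons_ofFn {β : Type*} {k : ℕ} (σ : β → β) (a : β) (f : Fin k → β)
    (ha : σ a = a) (hf : ∀ i, σ (f i) = f i.rev) :
    ((a :: List.ofFn f).map σ).reverse = (a :: List.ofFn f).rotate 1 := by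
  simp only [List.map_cons, List.map_ofFn, List.reverse_cons, List.rotate_cons_succ,
    List.rotate_zero, ha, List.reverse_ofFn, Function.comp_def, hf, Fin.rev_rev]

theorem rightCancel_of_leftCancel_of_injective_antiHom {M : Type*} [Monoid M]
    (ψ : M →* Mᵐᵒᵖ) (hψ : Function.Injective ψ) (hleft : ∀ a x y : M, a * x = a * y → x = y)
    (a x y : M) (h : x * a = y * a) : x = y := by
  refine hψ (MulOpposite.unop_injective (hleft (ψ a).unop _ _ ?_))
  simpa only [map_mul, MulOpposite.unop_mul] using congrArg (fun z => (ψ z).unop) h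

namespace PresentedMonoid

open MulOpposite

variable {α : Type*} {rels : FreeMonoid α → FreeMonoid α → Prop} (σ : α → α)

theorem lift_op_of_eq_op_mk_reverse_map (w : FreeMonoid α) :
    FreeMonoid.lift (fun x => op (of rels (σ x))) w =
      op (mk rels (FreeMonoid.map σ w).reverse) := by
  induction w using FreeMonoid.inductionOn' with
  | one => rfl
  | of_mul x w ih =>
    rw [map_mul, ih, FreeMonoid.lift_eval_of, map_mul, FreeMonoid.reverse_mul, map_mul, op_mul]
    rfl

variable (h : ∀ a b, rels a b →
  mk rels (FreeMonoid.map σ a).reverse = mk rels (FreeMonoid.map σ b).reverse)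

def reverseMap : PresentedMonoid rels →* (PresentedMonoid rels)ᵐᵒᵖ :=
  lift (fun x => op (of rels (σ x))) fun a b hab => by
    rw [lift_op_of_eq_op_mk_reverse_map, lift_op_of_eq_op_mk_reverse_map, h a b hab]

theorem reverseMap_mk (w : FreeMonoid α) :
    reverseMap σ h (mk rels w) = op (mk rels (FreeMonoid.map σ w).reverse) :=
  lift_op_of_eq_op_mk_reverse_map σ w

theorem reverseMap_injective (hσ : Function.Involutive σ) :
    Function.Injective (reverseMap σ h) := by
  have hinv : Function.LeftInverse (fun x => (reverseMap σ h x).unop)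
      (fun x => (reverseMap σ h x).unop) := fun x => by
    induction x with | _ w
    simp only [reverseMap_mk, unop_op]
    congr 1
    change ((w.toList.map σ).reverse.map σ).reverse = w.toList
    rw [List.map_reverse, List.reverse_reverse, List.map_map, hσ.comp_self, List.map_id]
  exact fun x y hxy => hinv.injective (congrArg unop hxy)

end PresentedMonoid

namespace Gmn

def Gen.rev {m n : ℕ} : Gen m n → Gen m n
  | .s => .s
  | .t i => .t i.rev
  | .u j => .u j.rev

theorem Gen.rev_involutive {m n : ℕ} : Function.Involutive (Gen.rev : Gen m n → Gen m n) := by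
  intro g
  cases g <;> simp [Gen.rev]

theorem reverse_map_rev_wordT {m n : ℕ} :
    ((wordT m n).map Gen.rev).reverse = (wordT m n).rotate 1 :=
  List.reverse_map_cons_ofFn _ _ _ rfl fun _ => rfl

theorem reverse_map_rev_wordU {m n : ℕ} :
    ((wordU m n).map Gen.rev).reverse = (wordU m n).rotate 1 :=
  List.reverse_map_cons_ofFn _ _ _ rfl fun _ => rfl

theorem mk_reverse_map_rotate_eq {m n : ℕ} {w : List (Gen m n)}
    (hw : (w.map Gen.rev).reverse = w.rotate 1)
    (hrot : ∀ j, Rel m n (.ofList w) (.ofList (w.rotate j))) (j k : ℕ) :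
    PresentedMonoid.mk (Rel m n) (.ofList ((w.rotate j).map Gen.rev).reverse) =
      PresentedMonoid.mk (Rel m n) (.ofList ((w.rotate k).map Gen.rev).reverse) := by
  simp only [List.map_rotate, List.reverse_rotate, hw, List.rotate_rotate]
  rw [← PresentedMonoid.mk_eq_mk_of_rel (hrot _), ← PresentedMonoid.mk_eq_mk_of_rel (hrot _)]

theorem mk_reverse_map_rev_eq_of_rel {m n : ℕ} (a b : FreeMonoid (Gen m n)) (hab : Rel m n a b) :
    PresentedMonoid.mk (Rel m n) (FreeMonoid.map Gen.rev a).reverse =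
      PresentedMonoid.mk (Rel m n) (FreeMonoid.map Gen.rev b).reverse := by
  cases hab with
  | rotT j =>
    have h := mk_reverse_map_rotate_eq (w := wordT m n) reverse_map_rev_wordT Rel.rotT 0 j
    rwa [List.rotate_zero] at h
  | rotU j =>
    have h := mk_reverse_map_rotate_eq (w := wordU m n) reverse_map_rev_wordU Rel.rotU 0 j
    rwa [List.rotate_zero] at h
  | comm i j => exact (PresentedMonoid.mk_eq_mk_of_rel (Rel.comm i.rev j.rev)).symm

theorem left_cancel_imp_right_cancel_general (m n : ℕ)
    (hleft : ∀ a x y : GP m n, a * x = a * y → x = y) :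
    ∀ a x y : GP m n, x * a = y * a → x = y :=
  rightCancel_of_leftCancel_of_injective_antiHom _
    (PresentedMonoid.reverseMap_injective Gen.rev mk_reverse_map_rev_eq_of_rel
      Gen.rev_involutive) hleft

/-- For `m, n ≥ 1`, if the monoid `G⁺_{m,n}` is left cancellative then it is right
cancellative. -/
theorem left_cancel_imp_right_cancel (m n : ℕ) (hm : 1 ≤ m) (hn : 1 ≤ n)
    (hleft : ∀ a x y : GP m n, a * x = a * y → x = y) :
    ∀ a x y : GP m n, x * a = y * a → x = y :=
  left_cancel_imp_right_cancel_general m n hleft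

end Gmn
end

section
/- For all integers m, n ≥ 1, for every generator v ∈ {s, t_1, …, t_m, u_1, …, u_n} and all elements X, Y of the monoid G⁺_{m,n}, if v·X = v·Y in G⁺_{m,n} then X = Y. -/
namespace Gmn
/-!
Project `G⁺_{m,n}` onto the monoids `C_T`, `C_U` in which all rotations of `s t₁ ⋯ t_m`, resp.
`s u₁ ⋯ u_n`, are equal, by erasing the letters of the other cycle.

In the monoid `C_w = PresentedMonoid (RotRel w)` of a word `w` without repeated letters, every
word over `w` has the normal form `wᵏ r`, with `r` free of rotations of `w`, obtained by scanning
from the left and deleting a rotation as soon as one is completed. It is an invariant because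
feeding a whole rotation to a reduced word just deletes it. So `w` is left cancellable, hence so
is every letter `a` of `w`, since `a` followed by the rest of a rotation is `w`.

The two projections together are injective on `G⁺_{m,n}`: words with equal projections are equal
because the `t`'s commute with the `u`'s, and every rewriting of one projection lifts to
`G⁺_{m,n}`, since a word projecting to a rotation `ρ` of one cycle is congruent to `p ρ q` with
`p`, `q` written in the letters of the other cycle. Now `v X = v Y` projects to two equations in
which `v` cancels.
-/

section PresentedMonoid

variable {α : Type*} (rels : FreeMonoid α → FreeMonoid α → Prop)

def ofWord (x : List α) : PresentedMonoid rels :=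
  PresentedMonoid.mk rels (FreeMonoid.ofList x)

variable {rels}

@[simp] lemma ofWord_nil : ofWord rels ([] : List α) = 1 := rfl

@[simp] lemma ofWord_append (x y : List α) :
    ofWord rels (x ++ y) = ofWord rels x * ofWord rels y := by
  simp [ofWord, FreeMonoid.ofList_append]

@[simp] lemma ofWord_cons (a : α) (x : List α) :
    ofWord rels (a :: x) = PresentedMonoid.of rels a * ofWord rels x :=
  ofWord_append [a] x

lemma ofWord_surjective : Function.Surjective (ofWord (α := α) rels) := fun X => by
  obtain ⟨x, rfl⟩ := PresentedMonoid.surjective_mk X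
  exact ⟨x.toList, by simp [ofWord]⟩

lemma ofWord_eq_ofWord_iff {x y : List α} :
    ofWord rels x = ofWord rels y ↔ conGen rels (.ofList x) (.ofList y) :=
  PresentedMonoid.mk_eq_mk_iff

end PresentedMonoid

section CyclicMonoid

variable {α : Type*} {w : List α}

def RotRel (w : List α) (x y : FreeMonoid α) : Prop := x.toList ~r w ∧ y.toList ~r w

lemma ofWord_rotRel_of_isRotated {ρ : List α} (h : ρ ~r w) :
    ofWord (RotRel w) ρ = ofWord (RotRel w) w :=
  PresentedMonoid.mk_eq_mk_of_rel ⟨by simpa using h, by simpa using List.IsRotated.refl w⟩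

lemma exists_isRotated_cons {a : α} (ha : a ∈ w) : ∃ t, a :: t ~r w ∧ t ++ [a] ~r w := by
  obtain ⟨s₁, s₂, rfl⟩ := List.append_of_mem ha
  have h : a :: (s₂ ++ s₁) ~r s₁ ++ a :: s₂ := by
    simpa using List.isRotated_append (l := a :: s₂) (l' := s₁)
  exact ⟨s₂ ++ s₁, h, (List.isRotated_concat a _).trans h⟩

lemma commute_ofWord_cycle {x : List α} (hx : x ⊆ w) :
    Commute (ofWord (RotRel w) w) (ofWord (RotRel w) x) := by
  induction x with
  | nil => exact Commute.one_right _
  | cons a x ih =>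
    rw [List.cons_subset] at hx
    obtain ⟨t, hat, hta⟩ := exists_isRotated_cons hx.1
    rw [ofWord_cons]
    refine Commute.mul_right ?_ (ih hx.2)
    have h₁ := ofWord_rotRel_of_isRotated hat
    have h₂ := ofWord_rotRel_of_isRotated hta
    simp only [ofWord_cons, ofWord_append, ofWord_nil, mul_one] at h₁ h₂
    rw [Commute, SemiconjBy]
    nth_rewrite 1 [← h₁]
    rw [mul_assoc, h₂]

lemma eq_of_append_isRotated (hw : w.Nodup) {c x y : List α} (hc : c ≠ [])
    (hx : c ++ x ~r w) (hy : c ++ y ~r w) : x = y := by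
  have hnd : (c ++ x).Nodup := (hx.nodup_iff).2 hw
  obtain ⟨k, hk, hrot⟩ := List.isRotated_iff_mod.1 (hx.trans hy.symm)
  obtain ⟨a, c, rfl⟩ := List.exists_cons_of_ne_nil hc
  rcases hk.lt_or_eq with hk | rfl
  · have hhead : (a :: c ++ x)[k]? = (a :: c ++ x)[0]? := by
      rw [← List.head?_rotate hk, hrot]; simp
    rw [List.getElem?_eq_getElem hk, List.getElem?_eq_getElem (by simp),
      Option.some_inj, hnd.getElem_inj_iff] at hhead
    subst hhead
    simpa using hrot
  · rw [List.rotate_length] at hrot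
    simpa using hrot

def Reduced (w r : List α) : Prop := ∀ ρ, ρ <:+: r → ¬ ρ ~r w

lemma reduced_nil (hw₀ : w ≠ []) : Reduced w [] := fun ρ hρ hρw =>
  hw₀ <| by simpa [List.infix_nil.1 hρ] using hρw.symm

variable [DecidableEq α]

/-- Appends `a` to `σ.2`, deleting a final factor that is a rotation of `w` and counting the
deletion in `σ.1`. -/
def push (w : List α) (σ : ℕ × List α) (a : α) : ℕ × List α :=
  if (σ.2 ++ [a]).drop (σ.2.length + 1 - w.length) ~r w then
    (σ.1 + 1, (σ.2 ++ [a]).take (σ.2.length + 1 - w.length))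
  else (σ.1, σ.2 ++ [a])

def nf (w x : List α) : ℕ × List α := x.foldl (push w) (0, [])

lemma push_of_eq_append {k : ℕ} {r r₀ ρ : List α} {a : α} (h : r ++ [a] = r₀ ++ ρ)
    (hρ : ρ ~r w) : push w (k, r) a = (k + 1, r₀) := by
  have hlen : r.length + 1 - w.length = r₀.length := by
    have := congrArg List.length h
    simp only [List.length_append, List.length_singleton] at this
    have := hρ.perm.length_eq
    omega
  rw [push, hlen, h, List.drop_left, List.take_left, if_pos hρ]

lemma push_of_forall_not {k : ℕ} {r : List α} {a : α}
    (h : ∀ ρ, ρ <:+ r ++ [a] → ¬ ρ ~r w) :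
    push w (k, r) a = (k, r ++ [a]) := by
  rw [push, if_neg (h _ (List.drop_suffix _ _))]

lemma push_snd_prefix (σ : ℕ × List α) (a : α) : (push w σ a).2 <+: σ.2 ++ [a] := by
  unfold push
  split
  exacts [List.take_prefix _ _, List.prefix_refl _]

lemma push_add_fst (σ : ℕ × List α) (a : α) (j : ℕ) :
    push w (σ.1 + j, σ.2) a = ((push w σ a).1 + j, (push w σ a).2) := by
  unfold push
  split <;> simp [Nat.add_right_comm]

lemma foldl_push_add_fst (x : List α) (σ : ℕ × List α) (j : ℕ) :
    x.foldl (push w) (σ.1 + j, σ.2) = ((x.foldl (push w) σ).1 + j, (x.foldl (push w) σ).2) := by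
  induction x generalizing σ with
  | nil => rfl
  | cons a x ih => simp only [List.foldl_cons, push_add_fst, ih]

lemma Reduced.push_snd {σ : ℕ × List α} (hσ : Reduced w σ.2) (a : α) :
    Reduced w (push w σ a).2 := by
  obtain ⟨k, r⟩ := σ
  by_cases h : ∃ ρ, ρ <:+ r ++ [a] ∧ ρ ~r w
  · obtain ⟨ρ, ⟨r₀, hr₀⟩, hρ⟩ := h
    rw [push_of_eq_append hr₀.symm hρ]
    have hρ₀ : ρ ≠ [] := by
      rintro rfl
      exact hσ [] List.nil_infix hρ
    have hpre : r₀ <+: r := by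
      refine List.prefix_of_prefix_length_le ⟨ρ, hr₀⟩ (List.prefix_append r [a]) ?_
      have := congrArg List.length hr₀
      have := List.length_pos_iff.2 hρ₀
      simp only [List.length_append, List.length_singleton] at *
      omega
    exact fun τ hτ => hσ τ (hτ.trans hpre.isInfix)
  · push Not at h
    rw [push_of_forall_not h]
    intro τ hτ
    rcases List.infix_concat_iff.1 hτ with hτ | hτ
    exacts [h τ hτ, hσ τ hτ]

lemma Reduced.foldl_push_snd {σ : ℕ × List α} (hσ : Reduced w σ.2) (x : List α) :
    Reduced w (x.foldl (push w) σ).2 := by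
  induction x generalizing σ with
  | nil => exact hσ
  | cons a x ih => exact ih (hσ.push_snd a)

lemma foldl_push_of_reduced {k : ℕ} {u q : List α} (h : Reduced w (u ++ q)) :
    q.foldl (push w) (k, u) = (k, u ++ q) := by
  induction q generalizing u with
  | nil => simp
  | cons a q ih =>
    have hpre : u ++ [a] <:+: u ++ a :: q :=
      (List.prefix_append (u ++ [a]) q).isInfix.trans (by simp)
    rw [List.foldl_cons, push_of_forall_not fun ρ hρ => h ρ (hρ.isInfix.trans hpre)]
    simpa using ih (u := u ++ [a]) (by simpa using h)

/-- The deletion may happen before `ρ` is complete, against a suffix of `r`; as `w` has no repeated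
letters, that suffix consists of exactly the letters of `ρ` still to come. -/
lemma foldl_push_of_isRotated (hw : w.Nodup) {k : ℕ} {r ρ : List α} (hr : Reduced w r)
    (hρ : ρ ~r w) : ρ.foldl (push w) (k, r) = (k + 1, r) := by
  suffices ∀ q p, p ++ q ~r w → Reduced w (r ++ p) →
      q.foldl (push w) (k, r ++ p) = (k + 1, r) by
    simpa using this ρ [] (by simpa using hρ) (by simpa using hr)
  intro q
  induction q with
  | nil =>
    intro p hp hrp
    exact absurd (by simpa using hp) (hrp p (List.suffix_append r p).isInfix)
  | cons a q ih =>
    intro p hpq hrp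
    rw [List.foldl_cons]
    by_cases h : ∃ ρ', ρ' <:+ r ++ p ++ [a] ∧ ρ' ~r w
    · obtain ⟨ρ', ⟨r₀, hr₀⟩, hρ'⟩ := h
      have hlen : (p ++ [a]).length ≤ ρ'.length := by
        rw [hρ'.perm.length_eq, ← hpq.perm.length_eq]
        simp
      obtain ⟨r₁, rfl⟩ := List.suffix_of_suffix_length_le (by simp) ⟨r₀, hr₀⟩ hlen
      have hr₁ : r₁ = q := eq_of_append_isRotated hw (by simp)
        (List.isRotated_append.trans hρ') (by simpa using hpq)
      have hr₀₁ : r₀ ++ r₁ = r :=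
        List.append_cancel_right (by simpa using hr₀ : _ = r ++ (p ++ [a]))
      subst hr₁ hr₀₁
      rw [push_of_eq_append (r₀ := r₀) (by simp) hρ', foldl_push_of_reduced hr]
    · push Not at h
      have hred := hrp.push_snd (σ := (k, r ++ p)) a
      rw [push_of_forall_not h] at hred ⊢
      simpa using ih (p ++ [a]) (by simpa using hpq) (by simpa using hred)

lemma foldl_push_eq_of_ofWord_eq (hw : w.Nodup) {x y : List α}
    (h : ofWord (RotRel w) x = ofWord (RotRel w) y) {σ : ℕ × List α} (hσ : Reduced w σ.2) :
    x.foldl (push w) σ = y.foldl (push w) σ := by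
  let c : Con (FreeMonoid α) :=
    { r := fun x y => ∀ σ : ℕ × List α, Reduced w σ.2 →
        x.toList.foldl (push w) σ = y.toList.foldl (push w) σ
      iseqv := ⟨fun _ _ _ => rfl, fun h σ hσ => (h σ hσ).symm,
        fun h₁ h₂ σ hσ => (h₁ σ hσ).trans (h₂ σ hσ)⟩
      mul' := fun hx hy σ hσ => by
        simp only [FreeMonoid.toList_mul, List.foldl_append]
        rw [hx σ hσ, hy _ (hσ.foldl_push_snd _)] }
  have hle : conGen (RotRel w) ≤ c := Con.conGen_le.2 fun _ _ ⟨hx, hy⟩ σ hσ => by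
    rw [foldl_push_of_isRotated hw hσ hx, foldl_push_of_isRotated hw hσ hy]
  simpa using hle (ofWord_eq_ofWord_iff.1 h) σ hσ

lemma ofWord_push {σ : ℕ × List α} {a : α} (hσ : σ.2 ⊆ w) (ha : a ∈ w) :
    ofWord (RotRel w) w ^ (push w σ a).1 * ofWord (RotRel w) (push w σ a).2 =
      ofWord (RotRel w) w ^ σ.1 * ofWord (RotRel w) (σ.2 ++ [a]) := by
  obtain ⟨k, r⟩ := σ
  by_cases h : ∃ ρ, ρ <:+ r ++ [a] ∧ ρ ~r w
  · obtain ⟨ρ, ⟨r₀, hr₀⟩, hρ⟩ := h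
    have hr₀w : r₀ ⊆ w := List.Subset.trans (List.subset_append_left r₀ ρ)
      (hr₀ ▸ List.append_subset.2 ⟨hσ, by simpa using ha⟩)
    rw [push_of_eq_append hr₀.symm hρ, ← hr₀, ofWord_append, ofWord_rotRel_of_isRotated hρ]
    dsimp only
    rw [pow_succ, mul_assoc, (commute_ofWord_cycle hr₀w).eq]
  · push Not at h
    rw [push_of_forall_not h]

lemma ofWord_foldl_push {σ : ℕ × List α} {x : List α} (hσ : σ.2 ⊆ w) (hx : x ⊆ w) :
    ofWord (RotRel w) w ^ (x.foldl (push w) σ).1 * ofWord (RotRel w) (x.foldl (push w) σ).2 =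
      ofWord (RotRel w) w ^ σ.1 * ofWord (RotRel w) (σ.2 ++ x) := by
  induction x generalizing σ with
  | nil => simp
  | cons a x ih =>
    rw [List.cons_subset] at hx
    have hpush : (push w σ a).2 ⊆ w := List.Subset.trans (push_snd_prefix σ a).subset
      (List.append_subset.2 ⟨hσ, by simpa using hx.1⟩)
    rw [List.foldl_cons, ih hpush hx.2, ofWord_append, ← mul_assoc, ofWord_push hσ hx.1]
    simp [mul_assoc]

lemma pow_mul_ofWord_nf {x : List α} (hx : x ⊆ w) :
    ofWord (RotRel w) w ^ (nf w x).1 * ofWord (RotRel w) (nf w x).2 = ofWord (RotRel w) x := by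
  simpa [nf] using ofWord_foldl_push (σ := (0, [])) (List.nil_subset _) hx

lemma nf_eq_of_ofWord_eq (hw : w.Nodup) (hw₀ : w ≠ []) {x y : List α}
    (h : ofWord (RotRel w) x = ofWord (RotRel w) y) : nf w x = nf w y :=
  foldl_push_eq_of_ofWord_eq hw h (reduced_nil hw₀)

lemma nf_cycle_append (hw : w.Nodup) (hw₀ : w ≠ []) (x : List α) :
    nf w (w ++ x) = ((nf w x).1 + 1, (nf w x).2) := by
  rw [nf, List.foldl_append, foldl_push_of_isRotated hw (reduced_nil hw₀) (List.IsRotated.refl w)]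
  exact foldl_push_add_fst x (0, []) 1

/-- Multiplying on the left by the rest of a rotation of `w` ending in `a` turns `a` into `w`, which
the normal form cancels. -/
theorem of_mul_ofWord_cancel (hw : w.Nodup) {a : α} (ha : a ∈ w) {x y : List α} (hx : x ⊆ w)
    (hy : y ⊆ w)
    (h : PresentedMonoid.of (RotRel w) a * ofWord (RotRel w) x =
      PresentedMonoid.of (RotRel w) a * ofWord (RotRel w) y) :
    ofWord (RotRel w) x = ofWord (RotRel w) y := by
  have hw₀ : w ≠ [] := List.ne_nil_of_mem ha
  obtain ⟨t, -, ht⟩ := exists_isRotated_cons ha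
  have hcyc : ofWord (RotRel w) (w ++ x) = ofWord (RotRel w) (w ++ y) := by
    rw [ofWord_append, ofWord_append, ← ofWord_rotRel_of_isRotated ht]
    simp [mul_assoc, h]
  have hnf := nf_eq_of_ofWord_eq hw hw₀ hcyc
  rw [nf_cycle_append hw hw₀, nf_cycle_append hw hw₀, Prod.mk.injEq, Nat.add_right_cancel_iff,
    ← Prod.ext_iff] at hnf
  rw [← pow_mul_ofWord_nf hx, ← pow_mul_ofWord_nf hy, hnf]

end CyclicMonoid

section Projection

variable {α : Type*} [DecidableEq α]

lemma exists_eq_append_cons_of_count_eq_one {l : List α} {a : α} (h : l.count a = 1) :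
    ∃ p q, l = p ++ a :: q ∧ a ∉ p ∧ a ∉ q := by
  have ha : a ∈ l := List.count_pos_iff.1 (by rw [h]; exact Nat.one_pos)
  obtain ⟨p, q, rfl⟩ := List.append_of_mem ha
  simp only [List.count_append, List.count_cons_self] at h
  exact ⟨p, q, rfl, List.count_eq_zero.1 (by omega), List.count_eq_zero.1 (by omega)⟩

def proj (A x : List α) : List α := x.filter (· ∈ A)

@[simp] lemma proj_nil (A : List α) : proj A [] = [] := rfl

@[simp] lemma proj_append (A x y : List α) : proj A (x ++ y) = proj A x ++ proj A y :=
  List.filter_append ..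

lemma proj_cons_of_mem {A x : List α} {a : α} (ha : a ∈ A) :
    proj A (a :: x) = a :: proj A x := by
  simp [proj, ha]

lemma proj_cons_of_not_mem {A x : List α} {a : α} (ha : a ∉ A) :
    proj A (a :: x) = proj A x := by
  simp [proj, ha]

lemma proj_eq_self {A x : List α} (h : x ⊆ A) : proj A x = x :=
  List.filter_eq_self.2 fun a ha => by simpa using h ha

lemma proj_eq_nil {A x : List α} (h : ∀ a ∈ x, a ∉ A) : proj A x = [] :=
  List.filter_eq_nil_iff.2 fun a ha => by simpa using h a ha

lemma proj_subset (A x : List α) : proj A x ⊆ A := fun a ha => by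
  simpa using (List.mem_filter.1 ha).2

lemma ofWord_proj_cons_cancel {A : List α} (hA : A.Nodup) {a : α} {x y : List α}
    (h : ofWord (RotRel A) (proj A (a :: x)) = ofWord (RotRel A) (proj A (a :: y))) :
    ofWord (RotRel A) (proj A x) = ofWord (RotRel A) (proj A y) := by
  by_cases ha : a ∈ A
  · rw [proj_cons_of_mem ha, proj_cons_of_mem ha, ofWord_cons, ofWord_cons] at h
    exact of_mul_ofWord_cancel hA ha (proj_subset A x) (proj_subset A y) h
  · rwa [proj_cons_of_not_mem ha, proj_cons_of_not_mem ha] at h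

end Projection

instance (m n : ℕ) : DecidableEq (Gen m n) := by
  intro a b
  cases a <;> cases b <;> simp only [Gen.t.injEq, Gen.u.injEq, reduceCtorEq] <;> infer_instance

section Sides

variable {m n : ℕ}

lemma gen_t_commute_gen_u (i : Fin m) (j : Fin n) : Commute (gen (.t i)) (gen (.u j)) :=
  PresentedMonoid.mk_eq_mk_of_rel (Rel.comm i j)

/-- The two cycles in either order, so that each argument below is made once for both. -/
def IsSides (A B : List (Gen m n)) : Prop :=
  A = wordT m n ∧ B = wordU m n ∨ A = wordU m n ∧ B = wordT m n

def Liftable (A B a b : List (Gen m n)) : Prop :=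
  ∀ x, proj A x = a →
    ∃ x', ofWord (Rel m n) x' = ofWord (Rel m n) x ∧ proj A x' = b ∧ proj B x' = proj B x

namespace Liftable

variable {A B a b c d : List (Gen m n)}

lemma refl (a : List (Gen m n)) : Liftable A B a a := fun x hx => ⟨x, rfl, hx, rfl⟩

lemma trans (h₁ : Liftable A B a b) (h₂ : Liftable A B b c) : Liftable A B a c := fun x hx => by
  obtain ⟨x₁, hx₁, hA₁, hB₁⟩ := h₁ x hx
  obtain ⟨x₂, hx₂, hA₂, hB₂⟩ := h₂ x₁ hA₁
  exact ⟨x₂, hx₂.trans hx₁, hA₂, hB₂.trans hB₁⟩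

lemma append (h₁ : Liftable A B a b) (h₂ : Liftable A B c d) : Liftable A B (a ++ c) (b ++ d) :=
  fun x hx => by
    obtain ⟨x₁, x₂, rfl, hx₁, hx₂⟩ := List.filter_eq_append_iff.1 hx
    obtain ⟨y₁, hy₁, hA₁, hB₁⟩ := h₁ x₁ hx₁
    obtain ⟨y₂, hy₂, hA₂, hB₂⟩ := h₂ x₂ hx₂
    exact ⟨y₁ ++ y₂, by simp [hy₁, hy₂], by simp [hA₁, hA₂], by simp [hB₁, hB₂]⟩

end Liftable

namespace IsSides

variable {A B : List (Gen m n)}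

lemma symm (h : IsSides A B) : IsSides B A := (Or.symm h).imp And.symm And.symm

lemma nodup (h : IsSides A B) : A.Nodup := by
  rcases h with ⟨rfl, rfl⟩ | ⟨rfl, rfl⟩ <;>
    simp [wordT, wordU, List.mem_ofFn, List.nodup_ofFn, Function.Injective]

lemma s_mem (h : IsSides A B) : Gen.s ∈ A := by
  rcases h with ⟨rfl, rfl⟩ | ⟨rfl, rfl⟩ <;> simp [wordT, wordU]

lemma mem_or_mem (h : IsSides A B) (g : Gen m n) : g ∈ A ∨ g ∈ B := by
  rcases h with ⟨rfl, rfl⟩ | ⟨rfl, rfl⟩ <;> cases g <;> simp [wordT, wordU, List.mem_ofFn]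

lemma eq_s_of_mem (h : IsSides A B) {g : Gen m n} (hA : g ∈ A) (hB : g ∈ B) : g = .s := by
  rcases h with ⟨rfl, rfl⟩ | ⟨rfl, rfl⟩ <;> cases g <;>
    simp_all [wordT, wordU, List.mem_ofFn]

lemma commute (h : IsSides A B) {g b : Gen m n} (hgA : g ∈ A) (hgB : g ∉ B) (hbB : b ∈ B)
    (hbA : b ∉ A) : Commute (gen g) (gen b) := by
  rcases h with ⟨rfl, rfl⟩ | ⟨rfl, rfl⟩ <;> cases g <;> cases b <;>
    simp_all [wordT, wordU, List.mem_ofFn]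
  exacts [gen_t_commute_gen_u _ _, (gen_t_commute_gen_u _ _).symm]

lemma ofWord_eq_of_isRotated (h : IsSides A B) {ρ : List (Gen m n)} (hρ : ρ ~r A) :
    ofWord (Rel m n) ρ = ofWord (Rel m n) A := by
  obtain ⟨k, rfl⟩ := hρ.symm
  rcases h with ⟨rfl, rfl⟩ | ⟨rfl, rfl⟩
  · exact (PresentedMonoid.mk_eq_mk_of_rel (Rel.rotT k)).symm
  · exact (PresentedMonoid.mk_eq_mk_of_rel (Rel.rotU k)).symm

lemma proj_eq_of_isRotated (h : IsSides A B) {ρ : List (Gen m n)} (hρ : ρ ~r A) :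
    proj B ρ = [.s] := by
  refine List.perm_singleton.1 ((hρ.perm.filter _).trans ?_)
  rcases h with ⟨rfl, rfl⟩ | ⟨rfl, rfl⟩ <;> simp [wordT, wordU]

lemma ofWord_proj_eq_of_isRotated (h : IsSides A B) {C ρ ρ' : List (Gen m n)}
    (hC : C = A ∨ C = B) (hρ : ρ ~r C) (hρ' : ρ' ~r C) :
    ofWord (RotRel A) (proj A ρ) = ofWord (RotRel A) (proj A ρ') := by
  rcases hC with rfl | rfl
  · rw [proj_eq_self fun _ => hρ.mem_iff.1, proj_eq_self fun _ => hρ'.mem_iff.1,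
      ofWord_rotRel_of_isRotated hρ, ofWord_rotRel_of_isRotated hρ']
  · rw [h.symm.proj_eq_of_isRotated hρ, h.symm.proj_eq_of_isRotated hρ']

lemma ofWord_proj_eq (h : IsSides A B) {x y : List (Gen m n)}
    (hxy : ofWord (Rel m n) x = ofWord (Rel m n) y) :
    ofWord (RotRel A) (proj A x) = ofWord (RotRel A) (proj A y) := by
  let c : Con (FreeMonoid (Gen m n)) :=
    { r := fun x y => ofWord (RotRel A) (proj A x.toList) = ofWord (RotRel A) (proj A y.toList)
      iseqv := ⟨fun _ => rfl, Eq.symm, Eq.trans⟩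
      mul' := fun hx hy => by
        simp only [FreeMonoid.toList_mul, proj_append, ofWord_append, hx, hy] }
  have hT : wordT m n = A ∨ wordT m n = B := by
    rcases h with ⟨rfl, rfl⟩ | ⟨rfl, rfl⟩ <;> simp
  have hU : wordU m n = A ∨ wordU m n = B := by
    rcases h with ⟨rfl, rfl⟩ | ⟨rfl, rfl⟩ <;> simp
  have hle : conGen (Rel m n) ≤ c := Con.conGen_le.2 fun x y hr => by
    cases hr with
    | rotT j =>
      exact h.ofWord_proj_eq_of_isRotated hT (List.IsRotated.refl _) (List.IsRotated.forall _ _)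
    | rotU j =>
      exact h.ofWord_proj_eq_of_isRotated hU (List.IsRotated.refl _) (List.IsRotated.forall _ _)
    | comm i j =>
      rcases h with ⟨rfl, rfl⟩ | ⟨rfl, rfl⟩ <;> simp [c, proj, wordT, wordU, List.mem_ofFn]
  exact hle (ofWord_eq_ofWord_iff.1 hxy)

lemma commute_gen_ofWord (h : IsSides A B) {g : Gen m n} (hgA : g ∈ A) (hgB : g ∉ B)
    {y : List (Gen m n)} (hy : ∀ b ∈ y, b ∉ A) : Commute (gen g) (ofWord (Rel m n) y) := by
  induction y with
  | nil => exact Commute.one_right _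
  | cons b y ih =>
    rw [List.forall_mem_cons] at hy
    exact (h.commute hgA hgB ((h.mem_or_mem b).resolve_left hy.1) hy.1).mul_right (ih hy.2)

/-- The letters in front of `g` in `y` lie in `B`: they commute with `g` unless `g = s`, and then
there are none. -/
lemma exists_cons_of_proj_eq (h : IsSides A B) {g : Gen m n} (hg : g ∈ A)
    {y lA lB : List (Gen m n)} (hyA : proj A y = g :: lA) (hyB : proj B y = proj B [g] ++ lB) :
    ∃ y', ofWord (Rel m n) (g :: y') = ofWord (Rel m n) y ∧
      proj A y' = lA ∧ proj B y' = lB := by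
  obtain ⟨y₁, y₂, rfl, hy₁, -, hy₂⟩ := List.filter_eq_cons_iff.1 hyA
  have hy₁A : ∀ b ∈ y₁, b ∉ A := fun b hb => by simpa using hy₁ b hb
  have hy₁B : proj B y₁ = y₁ :=
    proj_eq_self fun b hb => (h.mem_or_mem b).resolve_left (hy₁A b hb)
  by_cases hgB : g ∈ B
  · obtain rfl : y₁ = [] := by
      cases y₁ with
      | nil => rfl
      | cons b y₁ =>
        rw [proj_append, hy₁B, proj_cons_of_mem hgB, proj_cons_of_mem hgB] at hyB
        simp only [List.cons_append, List.cons.injEq, proj_nil, List.nil_append] at hyB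
        exact absurd (hyB.1 ▸ hg) (hy₁A b List.mem_cons_self)
    refine ⟨y₂, rfl, hy₂, ?_⟩
    simpa [proj_cons_of_mem hgB] using hyB
  · refine ⟨y₁ ++ y₂, ?_, ?_, ?_⟩
    · simp only [ofWord_cons, ofWord_append, ← mul_assoc,
        (h.commute_gen_ofWord hg hgB hy₁A).eq]
    · rw [proj_append, proj_eq_nil hy₁A, List.nil_append]
      exact hy₂
    · simpa [proj_cons_of_not_mem hgB] using hyB

theorem ofWord_eq_of_proj_eq (h : IsSides A B) {x y : List (Gen m n)}
    (hA : proj A x = proj A y) (hB : proj B x = proj B y) :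
    ofWord (Rel m n) x = ofWord (Rel m n) y := by
  induction x generalizing y A B with
  | nil =>
    cases y with
    | nil => rfl
    | cons b y =>
      rcases h.mem_or_mem b with hb | hb
      · simp [proj_cons_of_mem hb] at hA
      · simp [proj_cons_of_mem hb] at hB
  | cons g x ih =>
    wlog hg : g ∈ A generalizing A B
    · exact this h.symm hB hA ((h.mem_or_mem g).resolve_left hg)
    obtain ⟨y', hy', hA', hB'⟩ := h.exists_cons_of_proj_eq hg
      (by rw [← hA, proj_cons_of_mem hg]) (by rw [← hB, ← proj_append]; rfl)
    rw [← hy', ofWord_cons, ofWord_cons, ih h hA'.symm hB'.symm]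

/-- `x` contains `s` once, so by the projection lemma it is congruent to `p a q` with `p`, `q`
written in the letters of `B` other than `s`; there `a` can be replaced by `b`. -/
lemma liftable_of_isRotated (h : IsSides A B) {a b : List (Gen m n)} (ha : a ~r A)
    (hb : b ~r A) : Liftable A B a b := fun x hx => by
  have hcount : (proj B x).count .s = 1 := by
    rw [proj, List.count_filter (by simpa using h.symm.s_mem),
      ← List.count_filter (p := (· ∈ A)) (by simpa using h.s_mem), ← proj, hx,
      ha.perm.count_eq, List.count_eq_one_of_mem h.nodup h.s_mem]
  obtain ⟨p, q, hpq, hp, hq⟩ := exists_eq_append_cons_of_count_eq_one hcount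
  have hpq_mem : ∀ c ∈ p ++ q, c ∈ B ∧ c ∉ A := fun c hc => by
    have hcB : c ∈ B := proj_subset B x <| by
      rw [hpq]
      rcases List.mem_append.1 hc with hc | hc <;> simp [hc]
    refine ⟨hcB, fun hcA => ?_⟩
    have := h.eq_s_of_mem hcA hcB
    simp_all
  have hproj : ∀ c, c ~r A → proj A (p ++ c ++ q) = c ∧ proj B (p ++ c ++ q) = proj B x := by
    intro c hc
    have hpA : proj A p = [] := proj_eq_nil fun e he => by simp_all
    have hqA : proj A q = [] := proj_eq_nil fun e he => by simp_all
    have hpB : proj B p = p := proj_eq_self fun e he => by simp_all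
    have hqB : proj B q = q := proj_eq_self fun e he => by simp_all
    simp [proj_eq_self fun _ => hc.mem_iff.1, hpA, hqA, hpB, hqB, h.proj_eq_of_isRotated hc, hpq]
  refine ⟨p ++ b ++ q, ?_, (hproj b hb).1, (hproj b hb).2⟩
  calc ofWord (Rel m n) (p ++ b ++ q) = ofWord (Rel m n) (p ++ a ++ q) := by
        simp only [ofWord_append, h.ofWord_eq_of_isRotated ha, h.ofWord_eq_of_isRotated hb]
    _ = ofWord (Rel m n) x := h.ofWord_eq_of_proj_eq ((hproj a ha).1.trans hx.symm) (hproj a ha).2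

lemma liftable_of_ofWord_eq (h : IsSides A B) {a b : List (Gen m n)}
    (hab : ofWord (RotRel A) a = ofWord (RotRel A) b) : Liftable A B a b := by
  let c : Con (FreeMonoid (Gen m n)) :=
    { r := fun a b => Liftable A B a.toList b.toList ∧ Liftable A B b.toList a.toList
      iseqv := ⟨fun a => ⟨.refl _, .refl _⟩, fun h => ⟨h.2, h.1⟩,
        fun h₁ h₂ => ⟨h₁.1.trans h₂.1, h₂.2.trans h₁.2⟩⟩
      mul' := fun h₁ h₂ => by
        simp only [FreeMonoid.toList_mul]
        exact ⟨h₁.1.append h₂.1, h₁.2.append h₂.2⟩ }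
  have hle : conGen (RotRel A) ≤ c := Con.conGen_le.2 fun _ _ ⟨ha, hb⟩ =>
    ⟨h.liftable_of_isRotated ha hb, h.liftable_of_isRotated hb ha⟩
  exact (hle (ofWord_eq_ofWord_iff.1 hab)).1

theorem ofWord_eq_of_ofWord_proj_eq (h : IsSides A B) {x y : List (Gen m n)}
    (hA : ofWord (RotRel A) (proj A x) = ofWord (RotRel A) (proj A y))
    (hB : ofWord (RotRel B) (proj B x) = ofWord (RotRel B) (proj B y)) :
    ofWord (Rel m n) x = ofWord (Rel m n) y := by
  obtain ⟨x₁, hx₁, hA₁, hB₁⟩ := h.liftable_of_ofWord_eq hA x rfl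
  obtain ⟨x₂, hx₂, hB₂, hA₂⟩ := h.symm.liftable_of_ofWord_eq (hB₁ ▸ hB) x₁ rfl
  rw [← hx₁, ← hx₂]
  exact h.ofWord_eq_of_proj_eq (hA₂.trans hA₁) hB₂

end IsSides

end Sides

theorem gen_left_cancel_general (m n : ℕ) :
    ∀ v : Gen m n, ∀ X Y : GP m n, gen v * X = gen v * Y → X = Y := by
  intro v X Y h
  obtain ⟨x, rfl⟩ := ofWord_surjective X
  obtain ⟨y, rfl⟩ := ofWord_surjective Y
  have hTU : IsSides (wordT m n) (wordU m n) := Or.inl ⟨rfl, rfl⟩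
  have hvxy : ofWord (Rel m n) (v :: x) = ofWord (Rel m n) (v :: y) := by simpa using h
  exact hTU.ofWord_eq_of_ofWord_proj_eq
    (ofWord_proj_cons_cancel hTU.nodup (hTU.ofWord_proj_eq hvxy))
    (ofWord_proj_cons_cancel hTU.symm.nodup (hTU.symm.ofWord_proj_eq hvxy))

/-- For all `m, n ≥ 1`, every generator `v` of `G⁺_{m,n}` is left cancellable:
`v·X = v·Y` implies `X = Y`. -/
theorem gen_left_cancel (m n : ℕ) (hm : 1 ≤ m) (hn : 1 ≤ n) :
    ∀ v : Gen m n, ∀ X Y : GP m n, gen v * X = gen v * Y → X = Y :=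
  gen_left_cancel_general m n

end Gmn
end
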